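/- arXiv:1304.5144 — 13 statements merged into one kernel-verified Lean document; each statement's English description precedes it below -/
import Mathlib

section
/- Let G be a group, U and V subgroups of G, and W a subgroup of U ∩ V. Suppose θ: U → V is a group isomorphism such that θ(x) = x for all x ∈ W, and suppose that the centraliser C_G(W ∩ g⁻¹Wg) is trivial for all g ∈ U. Then U = V and θ is the identity map on U. -/
/-!
If `f` fixes `W` pointwise and `w, g w g⁻¹` both lie in `W`, then applying `f` to
`g w g⁻¹` shows that `f g` and `g` conjugate `w` to the same element, so `g⁻¹ f(g)` centralises
`W ∩ g⁻¹ W g`. Triviality of these centralisers forces `f(g) = g` for every `g ∈ U`, and an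
isomorphism `U ≃* V` that is the identity on elements identifies `U` with `V`.
-/

namespace Subgroup

variable {G : Type*} [Group G] {U W : Subgroup G}

theorem inv_mul_map_mem_centralizer_of_eqOn (hWU : W ≤ U) (f : U →* G)
    (hf : ∀ (w : G) (hw : w ∈ W), f ⟨w, hWU hw⟩ = w) (g : U) :
    (g : G)⁻¹ * f g ∈
      centralizer ((W ⊓ W.map (MulAut.conj (g : G)⁻¹).toMonoidHom : Subgroup G) : Set G) := by
  rw [mem_centralizer_iff]
  rintro _ ⟨hwW, w', hw'W, rfl⟩
  have hw : (MulAut.conj (g : G)⁻¹).toMonoidHom w' = (g : G)⁻¹ * w' * g := by simp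
  rw [hw] at hwW ⊢
  have hconj : f g * ((g : G)⁻¹ * w' * g) = w' * f g := by
    have h := congrArg f (show g * ⟨_, hWU hwW⟩ = ⟨w', hWU hw'W⟩ * g by ext; simp [mul_assoc])
    rwa [map_mul, map_mul, hf _ hwW, hf _ hw'W] at h
  calc (g : G)⁻¹ * w' * g * ((g : G)⁻¹ * f g) = (g : G)⁻¹ * (w' * f g) := by group
    _ = (g : G)⁻¹ * f g * ((g : G)⁻¹ * w' * g) := by rw [← hconj]; group

theorem map_eq_self_of_centralizer_eq_bot (hWU : W ≤ U) (f : U →* G)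
    (hf : ∀ (w : G) (hw : w ∈ W), f ⟨w, hWU hw⟩ = w)
    (hcent : ∀ g ∈ U,
      centralizer ((W ⊓ W.map (MulAut.conj g⁻¹).toMonoidHom : Subgroup G) : Set G) = ⊥)
    (g : U) : f g = g := by
  have hmem := inv_mul_map_mem_centralizer_of_eqOn hWU f hf g
  rwa [hcent g g.2, mem_bot, inv_mul_eq_one, eq_comm] at hmem

theorem eq_of_mulEquiv_coe_eq {V : Subgroup G} (θ : U ≃* V) (hθ : ∀ x : U, (θ x : G) = x) :
    U = V := by
  refine le_antisymm (fun u hu => ?_) (fun v hv => ?_)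
  · have hu' := (θ ⟨u, hu⟩).2
    rwa [hθ] at hu'
  · have hv' := (θ.symm ⟨v, hv⟩).2
    rwa [← hθ, MulEquiv.apply_symm_apply] at hv'

end Subgroup

/-- Rigidity lemma (Lemma 3.2 / `bewlem`): if `θ : U ≃* V` fixes `W ≤ U ⊓ V` pointwise and
`C_G(W ∩ g⁻¹Wg) = 1` for all `g ∈ U`, then `U = V` and `θ` is the identity. -/
theorem stmt_0 {G : Type*} [Group G] (U V W : Subgroup G) (hW : W ≤ U ⊓ V)
    (θ : U ≃* V)
    (hfix : ∀ (x : G) (hxW : x ∈ W) (hxU : x ∈ U), ((θ ⟨x, hxU⟩ : V) : G) = x)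
    (hcent : ∀ g ∈ U,
      Subgroup.centralizer ((W ⊓ Subgroup.map (MulAut.conj g⁻¹).toMonoidHom W : Subgroup G) : Set G) = ⊥) :
    U = V ∧ ∀ x : U, ((θ x : V) : G) = (x : G) := by
  have hWU : W ≤ U := fun w hw => (hW hw).1
  have hθ : ∀ x : U, ((θ x : V) : G) = (x : G) :=
    Subgroup.map_eq_self_of_centralizer_eq_bot hWU (V.subtype.comp θ.toMonoidHom)
      (fun w hw => hfix w hw (hWU hw)) hcent
  exact ⟨Subgroup.eq_of_mulEquiv_coe_eq θ hθ, hθ⟩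
end

section
/- Let G be a group in which every normal subgroup has trivial centre, and let A, B be normal subgroups of G. Then C_G(C_G(A ∩ B)) = C_G(C_G(A)) ∩ C_G(C_G(B)). -/
/-!
For normal subgroups `M`, `N` one has `⁅M, N⁆ ≤ M ⊓ N`, so `M ⊓ N = ⊥` forces `M ≤ C(N)`; when no
normal subgroup meets its centraliser, the converse holds too. Thus `C(N)` is the pseudocomplement
of `N` in the lattice of normal subgroups, and the identity is the pseudocomplement law
`(a ⊓ b)** = a** ⊓ b**`: with `Y = C²(A) ⊓ C²(B) ⊓ C(A ⊓ B)`, the subgroup `Y ⊓ A` is disjoint from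
`B`, hence lies in `C(B) ⊓ C²(B) = ⊥`; so `Y` is disjoint from `A` and lies in `C(A) ⊓ C²(A) = ⊥`.
-/

open Subgroup

namespace Subgroup

variable {G : Type*} [Group G]

theorem le_centralizer_of_disjoint {M N : Subgroup G} [M.Normal] [N.Normal] (h : Disjoint M N) :
    M ≤ centralizer (N : Set G) :=
  commutator_eq_bot_iff_le_centralizer.mp (le_bot_iff.mp (h.eq_bot ▸ commutator_le_inf M N))

theorem eq_bot_of_le_centralizer_of_le_centralizer_centralizer
    (hG : ∀ N : Subgroup G, N.Normal → N ⊓ centralizer (N : Set G) = ⊥)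
    {M N : Subgroup G} [N.Normal] (h : M ≤ centralizer (N : Set G))
    (h' : M ≤ centralizer (centralizer (N : Set G) : Set G)) : M = ⊥ :=
  le_bot_iff.mp (hG (centralizer (N : Set G)) inferInstance ▸ le_inf h h')

end Subgroup

/-- If every normal subgroup of `G` has trivial centre, then for normal subgroups `A`, `B`:
`C²_G(A ∩ B) = C²_G(A) ∩ C²_G(B)`. -/
theorem stmt_2 {G : Type*} [Group G]
    (hG : ∀ N : Subgroup G, N.Normal → N ⊓ Subgroup.centralizer (N : Set G) = ⊥)
    (A B : Subgroup G) (hA : A.Normal) (hB : B.Normal) :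
    Subgroup.centralizer ((Subgroup.centralizer ((A ⊓ B : Subgroup G) : Set G)) : Set G) =
      Subgroup.centralizer ((Subgroup.centralizer (A : Set G)) : Set G) ⊓
        Subgroup.centralizer ((Subgroup.centralizer (B : Set G)) : Set G) := by
  have := hA
  have := hB
  refine le_antisymm (le_inf (centralizer_le (centralizer_le inf_le_left))
    (centralizer_le (centralizer_le inf_le_right))) ?_
  set X := centralizer (centralizer (A : Set G) : Set G) ⊓
    centralizer (centralizer (B : Set G) : Set G)
  set Y := X ⊓ centralizer ((A ⊓ B : Subgroup G) : Set G)
  have hYA_B : Disjoint (Y ⊓ A) B := by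
    rw [disjoint_iff, inf_assoc, ← le_bot_iff, ← hG (A ⊓ B) inferInstance, inf_comm (A ⊓ B)]
    exact inf_le_inf_right _ inf_le_right
  have hYA : Y ⊓ A = ⊥ := eq_bot_of_le_centralizer_of_le_centralizer_centralizer hG
    (le_centralizer_of_disjoint hYA_B) (inf_le_left.trans (inf_le_left.trans inf_le_right))
  have hY : Y = ⊥ := eq_bot_of_le_centralizer_of_le_centralizer_centralizer hG
    (le_centralizer_of_disjoint (disjoint_iff.mpr hYA)) (inf_le_left.trans inf_le_left)
  exact le_centralizer_of_disjoint (disjoint_iff.mpr hY)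
end

section
/- Let G be a group with no non-trivial abelian normal subgroups, and let A, B be normal subgroups of G. Then C_A(B) = C_A(A ∩ B), where C_A(X) = A ∩ C_G(X). -/
/-! The centraliser of a normal subgroup is normal, so `A ⊓ C_G(A ∩ B)` is normal and its
commutator with `B` lies in `A ∩ B ∩ C_G(A ∩ B)`, the centre of the normal subgroup `A ∩ B`. -/

namespace Subgroup

variable {G : Type*} [Group G]

theorem inf_centralizer_inf_le_centralizer {A B : Subgroup G} [A.Normal] [B.Normal]
    (hAB : A ⊓ B ⊓ centralizer (A ⊓ B : Subgroup G) = ⊥) :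
    A ⊓ centralizer (A ⊓ B : Subgroup G) ≤ centralizer B := by
  rw [← commutator_eq_bot_iff_le_centralizer, eq_bot_iff, ← hAB]
  exact (commutator_le_inf _ _).trans_eq (inf_right_comm _ _ _)

theorem inf_centralizer_eq_inf_centralizer_inf {A B : Subgroup G} [A.Normal] [B.Normal]
    (hAB : A ⊓ B ⊓ centralizer (A ⊓ B : Subgroup G) = ⊥) :
    A ⊓ centralizer (B : Set G) = A ⊓ centralizer ((A ⊓ B : Subgroup G) : Set G) :=
  le_antisymm (inf_le_inf_left _ (centralizer_le inf_le_right))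
    (le_inf inf_le_left (inf_centralizer_inf_le_centralizer hAB))

end Subgroup

/-- If every normal subgroup of `G` has trivial centre, then for normal subgroups `A`, `B`:
`C_A(B) = C_A(A ∩ B)`, where `C_A(X) = A ⊓ C_G(X)`. -/
theorem stmt_3 {G : Type*} [Group G]
    (hG : ∀ N : Subgroup G, N.Normal → N ⊓ Subgroup.centralizer (N : Set G) = ⊥)
    (A B : Subgroup G) (hA : A.Normal) (hB : B.Normal) :
    A ⊓ Subgroup.centralizer (B : Set G) =
      A ⊓ Subgroup.centralizer ((A ⊓ B : Subgroup G) : Set G) :=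
  Subgroup.inf_centralizer_eq_inf_centralizer_inf (hG _ inferInstance)
end

section
/- Let G be a group with no non-trivial abelian normal subgroups, and let A, B be normal subgroups of G. Then C_A(C_G(B)) = C_A(C_A(B)). -/
open Subgroup

/-- If every normal subgroup of `G` has trivial centre, then for normal subgroups `A`, `B`:
`C_A(C_G(B)) = C_A(C_A(B))`, where `C_A(X) = A ⊓ C_G(X)`. -/
theorem stmt_4 {G : Type*} [Group G]
    (hG : ∀ N : Subgroup G, N.Normal → N ⊓ Subgroup.centralizer (N : Set G) = ⊥)
    (A B : Subgroup G) (hA : A.Normal) (hB : B.Normal) :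
    A ⊓ Subgroup.centralizer ((Subgroup.centralizer (B : Set G)) : Set G) =
      A ⊓ Subgroup.centralizer ((A ⊓ Subgroup.centralizer (B : Set G) : Subgroup G) : Set G) := by
  set N := A ⊓ centralizer (B : Set G)
  refine le_antisymm (inf_le_inf_left A (centralizer_le inf_le_right)) (le_inf inf_le_left ?_)
  -- `A ⊓ C(N)` and `C(B)` are normal with intersection inside `N ⊓ C(N) = ⊥`, so they commute.
  rw [← commutator_eq_bot_iff_le_centralizer]
  refine commutator_eq_bot_of_disjoint (disjoint_iff.2 (eq_bot_iff.2 ?_))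
  calc A ⊓ centralizer (N : Set G) ⊓ centralizer (B : Set G)
      ≤ N ⊓ centralizer (N : Set G) := fun x hx => ⟨⟨hx.1.1, hx.2⟩, hx.1.2⟩
    _ = ⊥ := hG N inferInstance
end

section
/- Let G be a group with trivial centre, let K be a direct factor of G (i.e. G = K × C_G(K) internally), and let H be a subgroup of G such that H = C_G(C_G(H)). Then H is the internal direct product of H ∩ K and C_H(K). -/
/-!
Write `h ∈ H` as `h = k * l` with `k ∈ K`, `l ∈ L`. Any `m` commuting with `h` conjugates this
decomposition into another one of `h`, so by uniqueness `m` commutes with `k`; hence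
`k ∈ C_G(C_G(H)) = H`, and then `l = k⁻¹ * h ∈ H ∩ C_G(K)`. The intersection is trivial because
an element of `K ∩ C_G(K)` commutes with `K` and with `L ≤ C_G(K)`, hence with all of `G = K ⊔ L`.
-/

namespace Subgroup

variable {G : Type*} [Group G] {K L : Subgroup G}

theorem le_centralizer_of_normal_of_disjoint [K.Normal] [L.Normal] (hKL : Disjoint K L) :
    L ≤ centralizer K :=
  fun l hl k hk => commute_of_normal_of_disjoint K L ‹_› ‹_› hKL k l hk hl

theorem inf_centralizer_le_center (hKL : K ⊔ L = ⊤) (hL : L ≤ centralizer K) :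
    K ⊓ centralizer K ≤ center G := by
  rintro x ⟨hxK, hxC⟩
  have hx : K ⊔ L ≤ centralizer {x} :=
    sup_le (fun k hk => mem_centralizer_singleton_iff.mpr (hxC k hk))
      (fun l hl => mem_centralizer_singleton_iff.mpr (hL hl x hxK).symm)
  rw [hKL, top_le_iff, centralizer_eq_top_iff_subset] at hx
  exact hx rfl

theorem commute_left_of_commute_mul [K.Normal] [L.Normal] (hKL : Disjoint K L)
    {k l m : G} (hk : k ∈ K) (hl : l ∈ L) (h : Commute m (k * l)) : Commute m k := by
  have hconj : k⁻¹ * (m * k * m⁻¹) = l * (m * l⁻¹ * m⁻¹) :=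
    calc k⁻¹ * (m * k * m⁻¹) = k⁻¹ * (m * (k * l)) * l⁻¹ * m⁻¹ := by group
      _ = k⁻¹ * (k * l * m) * l⁻¹ * m⁻¹ := by rw [h.eq]
      _ = l * (m * l⁻¹ * m⁻¹) := by group
  have hmem : k⁻¹ * (m * k * m⁻¹) ∈ K ⊓ L :=
    ⟨K.mul_mem (K.inv_mem hk) (‹K.Normal›.conj_mem k hk m),
      hconj ▸ L.mul_mem hl (‹L.Normal›.conj_mem _ (L.inv_mem hl) m)⟩
  rw [hKL.eq_bot, mem_bot, inv_mul_eq_one, eq_mul_inv_iff_mul_eq] at hmem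
  exact hmem.symm

theorem left_mem_centralizer_of_mul_mem [K.Normal] [L.Normal] (hKL : Disjoint K L)
    {S : Set G} {k l : G} (hk : k ∈ K) (hl : l ∈ L) (h : k * l ∈ centralizer S) :
    k ∈ centralizer S :=
  fun m hm => (commute_left_of_commute_mul hKL hk hl (h m hm)).eq

end Subgroup

open Subgroup

/-- If `Z(G) = 1`, `G = K × L` is an internal direct product (with `L = C_G(K)`), and
`H ≤ G` satisfies `H = C²_G(H)`, then `H` is the internal direct product of
`H ∩ K` and `C_H(K) = H ∩ C_G(K)`. -/
theorem stmt_5 {G : Type*} [Group G] (hZ : Subgroup.center G = ⊥)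
    (K L H : Subgroup G) (hKn : K.Normal) (hLn : L.Normal)
    (hKL : K ⊓ L = ⊥) (hKLsup : K ⊔ L = ⊤)
    (hH : H = Subgroup.centralizer ((Subgroup.centralizer (H : Set G)) : Set G)) :
    (H ⊓ K) ⊓ (H ⊓ Subgroup.centralizer (K : Set G)) = ⊥ ∧
      (H ⊓ K) ⊔ (H ⊓ Subgroup.centralizer (K : Set G)) = H := by
  have := hKn
  have := hLn
  have hdisj : Disjoint K L := disjoint_iff.mpr hKL
  have hLK : L ≤ centralizer K := le_centralizer_of_normal_of_disjoint hdisj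
  constructor
  · rw [eq_bot_iff, ← hZ]
    rintro x ⟨⟨-, hxK⟩, -, hxC⟩
    exact inf_centralizer_le_center hKLsup hLK ⟨hxK, hxC⟩
  · refine le_antisymm (sup_le inf_le_left inf_le_left) fun h hh => ?_
    obtain ⟨k, hk, l, hl, rfl⟩ := mem_sup_of_normal_left.mp (hKLsup ▸ mem_top h)
    have hkH : k ∈ H := by
      rw [hH] at hh ⊢
      exact left_mem_centralizer_of_mul_mem hdisj hk hl hh
    have hlH : l ∈ H := by simpa using H.mul_mem (H.inv_mem hkH) hh
    exact mul_mem_sup ⟨hkH, hk⟩ ⟨hlH, hLK hl⟩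
end

section
/- Dietzmann's Lemma: let G be a group and Σ a finite subset of G consisting of torsion elements such that Σ is invariant under conjugation by every element of G. Then the subgroup generated by Σ is finite. -/
/-!
Inverses of torsion elements are positive powers, so every element of `⟨S⟩` is a word in `S`.
In a word, all letters equal to `s` can be collected at the front at the cost of conjugating
the letters they pass, which keeps the word in `S`. If some `s` occurs at least `orderOf s`
times, collecting it and cancelling `s ^ orderOf s` shortens the word. So every element of `⟨S⟩` is a word of
length at most `∑ s ∈ S, (orderOf s - 1)`, and there are finitely many such words.
-/

theorem List.exists_lt_count_of_sum_lt_length {α : Type*} [DecidableEq α] {F : Finset α}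
    {l : List α} (hl : ∀ x ∈ l, x ∈ F) (b : α → ℕ) (h : ∑ x ∈ F, b x < l.length) :
    ∃ x ∈ F, b x < l.count x := by
  by_contra! hle
  have : l.length ≤ ∑ x ∈ F, b x := calc
    l.length = ∑ x ∈ l.toFinset, l.count x := l.sum_toFinset_count_eq_length.symm
    _ ≤ ∑ x ∈ F, l.count x :=
      Finset.sum_le_sum_of_subset fun x hx ↦ hl x (List.mem_toFinset.mp hx)
    _ ≤ ∑ x ∈ F, b x := Finset.sum_le_sum hle
  omega

theorem Set.Finite.setOf_list_forall_mem_length_le {α : Type*} {S : Set α} (hS : S.Finite)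
    (n : ℕ) : {l : List α | (∀ x ∈ l, x ∈ S) ∧ l.length ≤ n}.Finite := by
  have : Finite S := hS.to_subtype
  refine ((List.finite_length_le S n).image (List.map (↑))).subset ?_
  rintro l ⟨hlS, hln⟩
  obtain ⟨l', rfl⟩ : l ∈ Set.range (List.map ((↑) : S → α)) := by
    rwa [Set.range_list_map_coe]
  exact ⟨l', by simpa using hln, rfl⟩

section

variable {G : Type*} [Group G] {S : Set G}

theorem exists_prod_eq_pow_count_mul_prod [DecidableEq G]
    (hconj : ∀ g : G, ∀ s ∈ S, g * s * g⁻¹ ∈ S) (s : G) {l : List G} (hl : ∀ y ∈ l, y ∈ S) :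
    ∃ l' : List G, (∀ y ∈ l', y ∈ S) ∧ l'.length + l.count s = l.length ∧
      l.prod = s ^ l.count s * l'.prod := by
  induction l with
  | nil => exact ⟨[], by simp, by simp, by simp⟩
  | cons a t ih =>
    obtain ⟨t', ht'S, ht'len, ht'prod⟩ := ih fun y hy ↦ hl y (List.mem_cons_of_mem a hy)
    by_cases has : a = s
    · subst has
      refine ⟨t', ht'S, ?_, ?_⟩
      · simp only [List.count_cons_self, List.length_cons, ← ht'len]; omega
      · rw [List.prod_cons, ht'prod, List.count_cons_self, pow_succ', mul_assoc]
    · refine ⟨(s ^ t.count s)⁻¹ * a * s ^ t.count s :: t', ?_, ?_, ?_⟩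
      · refine List.forall_mem_cons.mpr ⟨?_, ht'S⟩
        simpa using hconj (s ^ t.count s)⁻¹ a (hl a List.mem_cons_self)
      · simp only [List.length_cons, List.count_cons_of_ne has, ← ht'len]; omega
      · rw [List.count_cons_of_ne has, List.prod_cons, List.prod_cons, ht'prod]
        simp [mul_assoc]

theorem exists_shorter_prod_eq_of_orderOf_le_count [DecidableEq G]
    (hconj : ∀ g : G, ∀ s ∈ S, g * s * g⁻¹ ∈ S) {s : G} (hs : s ∈ S) (hs₀ : 0 < orderOf s)
    {l : List G} (hl : ∀ y ∈ l, y ∈ S) (hcount : orderOf s ≤ l.count s) :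
    ∃ l' : List G, (∀ y ∈ l', y ∈ S) ∧ l'.length < l.length ∧ l'.prod = l.prod := by
  obtain ⟨l', hl'S, hl'len, hl'prod⟩ := exists_prod_eq_pow_count_mul_prod hconj s hl
  refine ⟨List.replicate (l.count s - orderOf s) s ++ l', ?_, ?_, ?_⟩
  · simp only [List.mem_append, List.mem_replicate]
    rintro y (⟨-, rfl⟩ | hy)
    exacts [hs, hl'S y hy]
  · simp only [List.length_append, List.length_replicate]
    omega
  · rw [hl'prod, List.prod_append, List.prod_replicate, ← Nat.sub_add_cancel hcount, pow_add,
      pow_orderOf_eq_one, mul_one, Nat.sub_add_cancel hcount]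

theorem exists_prod_eq_of_length_le_sum_orderOf [DecidableEq G] (hfin : S.Finite)
    (htor : ∀ s ∈ S, IsOfFinOrder s) (hconj : ∀ g : G, ∀ s ∈ S, g * s * g⁻¹ ∈ S)
    {l : List G} (hl : ∀ y ∈ l, y ∈ S) :
    ∃ l' : List G, (∀ y ∈ l', y ∈ S) ∧
      l'.length ≤ ∑ s ∈ hfin.toFinset, (orderOf s - 1) ∧ l'.prod = l.prod := by
  induction hn : l.length using Nat.strong_induction_on generalizing l with
  | _ n ih =>
  by_cases hshort : l.length ≤ ∑ s ∈ hfin.toFinset, (orderOf s - 1)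
  · exact ⟨l, hl, hshort, rfl⟩
  obtain ⟨s, hsF, hs⟩ := List.exists_lt_count_of_sum_lt_length
    (fun y hy ↦ hfin.mem_toFinset.mpr (hl y hy)) (fun s ↦ orderOf s - 1) (not_le.mp hshort)
  have hsS : s ∈ S := hfin.mem_toFinset.mp hsF
  obtain ⟨l₁, hl₁S, hl₁len, hl₁prod⟩ := exists_shorter_prod_eq_of_orderOf_le_count hconj hsS
    (htor s hsS).orderOf_pos hl (by omega)
  obtain ⟨l', hl'S, hl'len, hl'prod⟩ := ih _ (hn ▸ hl₁len) hl₁S rfl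
  exact ⟨l', hl'S, hl'len, hl'prod.trans hl₁prod⟩

end

/-- Dietzmann's Lemma: a finite, conjugation-invariant set of torsion elements generates a
finite subgroup. -/
theorem stmt_7 {G : Type*} [Group G] (S : Set G) (hfin : S.Finite)
    (htor : ∀ s ∈ S, IsOfFinOrder s)
    (hconj : ∀ g : G, ∀ s ∈ S, g * s * g⁻¹ ∈ S) :
    ((Subgroup.closure S : Subgroup G) : Set G).Finite := by
  classical
  refine ((hfin.setOf_list_forall_mem_length_le
    (∑ s ∈ hfin.toFinset, (orderOf s - 1))).image List.prod).subset ?_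
  intro x hx
  rw [SetLike.mem_coe, ← Subgroup.mem_toSubmonoid,
    Subgroup.closure_toSubmonoid_of_isOfFinOrder htor] at hx
  obtain ⟨l, hlS, rfl⟩ := Submonoid.exists_list_of_mem_closure hx
  obtain ⟨l', hl'S, hl'len, hl'prod⟩ := exists_prod_eq_of_length_le_sum_orderOf hfin htor hconj hlS
  exact ⟨l', ⟨hl'S, hl'len⟩, hl'prod⟩
end

section
/- Let M be a meet-semilattice with least element 0, and let ⊥: M → M be an order-reversing involution such that for all α, β ∈ M, α ∧ β = 0 if and only if β ≤ α⊥. Then M is a Boolean algebra with minimum 0, maximum 0⊥, complementation given by ⊥, and join given by α ∨ β = (α⊥ ∧ β⊥)⊥. In particular M is distributive: (α ∨ δ) ∧ β = (α ∧ β) ∨ (δ ∧ β) for all α, β, δ ∈ M. -/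
/-!
The disjointness condition makes `c` a self-adjoint antitone Galois connection, and together
with `c (c α) = α` it turns `c (c γ ⊓ β)` into a Heyting implication:
`β ⊓ x ≤ γ ↔ x ≤ c (c γ ⊓ β)`. Hence `β ⊓ ·` is a left adjoint and preserves the joins
`α ⊔ δ = c (c α ⊓ c δ)`, which is distributivity; `c` is then a complement because
`α ⊓ c α = ⊥` and, dually, `α ⊔ c α = c ⊥`.
-/

namespace OrthoCompl

variable {M : Type*} [SemilatticeInf M] [OrderBot M] {c : M → M}

section Disjointness

variable (hdisj : ∀ α β : M, α ⊓ β = ⊥ ↔ β ≤ c α)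
include hdisj

theorem le_comm {α β : M} : β ≤ c α ↔ α ≤ c β := by
  rw [← hdisj, ← hdisj, inf_comm]

theorem le_compl_compl (α : M) : α ≤ c (c α) :=
  (le_comm hdisj).1 le_rfl

theorem antitone : Antitone c := fun _ β h =>
  (le_comm hdisj).2 (h.trans (le_compl_compl hdisj β))

theorem inf_compl_self (α : M) : α ⊓ c α = ⊥ :=
  (hdisj α (c α)).2 le_rfl

theorem le_compl_bot (α : M) : α ≤ c ⊥ :=
  (le_comm hdisj).1 bot_le

variable (hinv : Function.Involutive c)
include hinv

theorem inf_le_iff_le_compl {β x γ : M} : β ⊓ x ≤ γ ↔ x ≤ c (c γ ⊓ β) := by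
  rw [← hdisj, inf_assoc, hdisj, hinv]

end Disjointness

section Structures

variable (hinv : Function.Involutive c) (hdisj : ∀ α β : M, α ⊓ β = ⊥ ↔ β ≤ c α)

abbrev lattice : Lattice M where
  sup α β := c (c α ⊓ c β)
  le_sup_left _ _ := (le_comm hdisj).2 inf_le_left
  le_sup_right _ _ := (le_comm hdisj).2 inf_le_right
  sup_le _ _ γ hα hβ := hinv γ ▸ antitone hdisj (le_inf (antitone hdisj hα) (antitone hdisj hβ))

abbrev distribLattice : DistribLattice M :=
  letI := lattice hinv hdisj
  DistribLattice.ofInfSupLe fun _ _ _ =>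
    (inf_le_iff_le_compl hdisj hinv).2 <| sup_le
      ((inf_le_iff_le_compl hdisj hinv).1 le_sup_left)
      ((inf_le_iff_le_compl hdisj hinv).1 le_sup_right)

abbrev booleanAlgebra : BooleanAlgebra M where
  __ := distribLattice hinv hdisj
  compl := c
  top := c ⊥
  bot := ⊥
  le_top := le_compl_bot hdisj
  bot_le _ := bot_le
  inf_compl_le_bot α := (inf_compl_self hdisj α).le
  top_le_sup_compl α := antitone hdisj (inf_compl_self hdisj (c α)).le

end Structures

end OrthoCompl

theorem stmt_8_general {M : Type*} [SemilatticeInf M] [OrderBot M] (c : M → M)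
    (hinv : ∀ α : M, c (c α) = α)
    (hdisj : ∀ α β : M, α ⊓ β = ⊥ ↔ β ≤ c α) :
    ∃ B : BooleanAlgebra M,
      (∀ α β : M, B.le α β ↔ α ≤ β) ∧
      (∀ α β : M, B.inf α β = α ⊓ β) ∧
      B.bot = ⊥ ∧
      B.top = c ⊥ ∧
      B.compl = c ∧
      (∀ α β : M, B.sup α β = c (c α ⊓ c β)) :=
  ⟨OrthoCompl.booleanAlgebra hinv hdisj, fun _ _ => Iff.rfl, fun _ _ => rfl, rfl, rfl, rfl,
    fun _ _ => rfl⟩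

/-- A meet-semilattice with least element `0` equipped with an order-reversing involution `c`
such that `α ⊓ β = 0 ↔ β ≤ c α` is a Boolean algebra, with minimum `⊥`, maximum `c ⊥`,
complementation `c`, and join `α ⊔ β = c (c α ⊓ c β)`. -/
theorem stmt_8 {M : Type*} [SemilatticeInf M] [OrderBot M] (c : M → M)
    (hinv : ∀ α : M, c (c α) = α)
    (hanti : ∀ α β : M, α ≤ β → c β ≤ c α)
    (hdisj : ∀ α β : M, α ⊓ β = ⊥ ↔ β ≤ c α) :
    ∃ B : BooleanAlgebra M,
      (∀ α β : M, B.le α β ↔ α ≤ β) ∧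
      (∀ α β : M, B.inf α β = α ⊓ β) ∧
      B.bot = ⊥ ∧
      B.top = c ⊥ ∧
      B.compl = c ∧
      (∀ α β : M, B.sup α β = c (c α ⊓ c β)) :=
  stmt_8_general c hinv hdisj
end

section
/- In a lattice with an order-reversing involution ⊥ satisfying the disjointness condition (α ∧ β = 0 iff β ≤ α⊥), the implication α ∧ β ≤ γ ⟺ α ≤ β⊥ ∨ γ holds for all α, β, γ, where ∨ is defined by α ∨ β = (α⊥ ∧ β⊥)⊥. -/
namespace Orthocomplementation

variable {M : Type*} [SemilatticeInf M] [OrderBot M] {c : M → M}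

theorem le_compl_comm (hdisj : ∀ α β : M, α ⊓ β = ⊥ ↔ β ≤ c α) {α β : M} :
    β ≤ c α ↔ α ≤ c β := by
  rw [← hdisj, inf_comm, hdisj]

theorem le_iff_inf_compl_eq_bot (hinv : ∀ α : M, c (c α) = α)
    (hdisj : ∀ α β : M, α ⊓ β = ⊥ ↔ β ≤ c α) {α β : M} :
    α ≤ β ↔ α ⊓ c β = ⊥ := by
  rw [hdisj, le_compl_comm hdisj, hinv]

end Orthocomplementation

theorem stmt_9_general {M : Type*} [SemilatticeInf M] [OrderBot M] (c : M → M)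
    (hinv : ∀ α : M, c (c α) = α)
    (hdisj : ∀ α β : M, α ⊓ β = ⊥ ↔ β ≤ c α) :
    ∀ α β γ : M, α ⊓ β ≤ γ ↔ α ≤ c (c (c β) ⊓ c γ) := by
  intro α β γ
  rw [hinv, Orthocomplementation.le_iff_inf_compl_eq_bot hinv hdisj, inf_assoc, hdisj,
    Orthocomplementation.le_compl_comm hdisj]

/-- In a meet-semilattice with `0` and an order-reversing involution `c` with
`α ⊓ β = 0 ↔ β ≤ c α`, defining the join by De Morgan duality `α ∨ β = c (c α ⊓ c β)`,
one has `α ⊓ β ≤ γ ↔ α ≤ (c β) ∨ γ`. -/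
theorem stmt_9 {M : Type*} [SemilatticeInf M] [OrderBot M] (c : M → M)
    (hinv : ∀ α : M, c (c α) = α)
    (hanti : ∀ α β : M, α ≤ β → c β ≤ c α)
    (hdisj : ∀ α β : M, α ⊓ β = ⊥ ↔ β ≤ c α) :
    ∀ α β γ : M, α ⊓ β ≤ γ ↔ α ≤ c (c (c β) ⊓ c γ) :=
  stmt_9_general c hinv hdisj
end

section
/- Let G be a locally compact group and H a discrete subgroup of G whose normaliser N_G(H) is open. Then H ≤ QZ(G). In particular, every discrete normal subgroup of a locally compact group is contained in the quasi-centre. -/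
/-!
Conjugating `h ∈ H` by elements of `N_G(H)` is a continuous map `N_G(H) → H`. As `H` is discrete,
its fibre over `h`, namely `N_G(H) ∩ C_G(h)`, is open in `N_G(H)` and hence in `G`; so `C_G(h)`
contains an open subgroup and is open.
-/

namespace Subgroup

variable {G : Type*} [Group G] [TopologicalSpace G]

def conjOfMemNormalizer (H : Subgroup G) (h : H) : normalizer (H : Set G) → H :=
  fun g => ⟨g * h * (g : G)⁻¹, (mem_normalizer_iff.mp g.2 h).mp h.2⟩

variable [ContinuousMul G] [ContinuousInv G]

theorem continuous_conjOfMemNormalizer (H : Subgroup G) (h : H) :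
    Continuous (H.conjOfMemNormalizer h) := by
  unfold conjOfMemNormalizer; fun_prop

theorem isOpen_normalizer_inf_centralizer_singleton {H : Subgroup G} [DiscreteTopology H]
    (hN : IsOpen (normalizer (H : Set G) : Set G)) {h : G} (hh : h ∈ H) :
    IsOpen ((normalizer (H : Set G) ⊓ centralizer {h} : Subgroup G) : Set G) := by
  have hfibre : IsOpen (H.conjOfMemNormalizer ⟨h, hh⟩ ⁻¹' {⟨h, hh⟩}) :=
    (isOpen_discrete _).preimage (continuous_conjOfMemNormalizer H _)
  convert hN.isOpenMap_subtype_val _ hfibre using 1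
  ext g
  simp only [coe_inf, Set.mem_inter_iff, SetLike.mem_coe, mem_centralizer_singleton_iff,
    Set.mem_image, Set.mem_preimage, Set.mem_singleton_iff, conjOfMemNormalizer, Subtype.ext_iff,
    Subtype.exists, exists_and_right, exists_eq_right, exists_prop]
  refine and_congr_right fun _ => ?_
  rw [mul_inv_eq_iff_eq_mul]

end Subgroup

theorem stmt_13_general {G : Type*} [Group G] [TopologicalSpace G] [IsTopologicalGroup G]
    (H : Subgroup G) [DiscreteTopology H] (hN : IsOpen (Subgroup.normalizer (H : Set G) : Set G)) :
    ∀ h ∈ H, IsOpen ((Subgroup.centralizer ({h} : Set G) : Subgroup G) : Set G) :=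
  fun _ hh =>
    Subgroup.isOpen_mono inf_le_right (Subgroup.isOpen_normalizer_inf_centralizer_singleton hN hh)

/-- A discrete subgroup of a locally compact group whose normaliser is open is contained in the
quasi-centre: each of its elements has open centraliser. -/
theorem stmt_13 {G : Type*} [Group G] [TopologicalSpace G] [IsTopologicalGroup G]
    [LocallyCompactSpace G]
    (H : Subgroup G) [DiscreteTopology H] (hN : IsOpen (Subgroup.normalizer (H : Set G) : Set G)) :
    ∀ h ∈ H, IsOpen ((Subgroup.centralizer ({h} : Set G) : Subgroup G) : Set G) :=
  stmt_13_general H hN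
end

section
/- Let U be a first-countable profinite group and K a closed subgroup of U. Then U commensurates K (i.e. for every u ∈ U, the subgroup uKu⁻¹ ∩ K has finite index in both K and uKu⁻¹) if and only if U normalises some open subgroup of K. -/
/-!
If `U` normalises an open subgroup `L` of `K`, then `L` lies in every conjugate of `K` and has
finite index in the compact group `K`; this gives commensuration.

Conversely, let `Vₙ` be a countable basis of open subgroups. By commensuration the closed sets
`Sₙ = {u | K ∩ Vₙ ≤ uKu⁻¹}` cover `U`, so by Baire one of them contains a coset `vW` of an open
subgroup `W`. Then `P = v⁻¹(K ∩ Vₙ)v` lies in `wKw⁻¹` for every `w ∈ W`, so the normal core of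
`K` (the intersection of all `gKg⁻¹`) contains the intersection of the finitely many conjugates
`rPr⁻¹`, `r` running over representatives of `U/W`. Each `rPr⁻¹` meets `K` in an open subgroup
of `K`, again by commensuration, so the normal core of `K` is the required subgroup.
-/

open Subgroup Topology

namespace Subgroup

section Group

variable {U : Type*} [Group U]

theorem map_conj_map_conj (H : Subgroup U) (a b : U) :
    (H.map (MulAut.conj a).toMonoidHom).map (MulAut.conj b).toMonoidHom =
      H.map (MulAut.conj (b * a)).toMonoidHom := by
  rw [map_map, map_mul]
  rfl

theorem mem_map_conj {H : Subgroup U} {g x : U} :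
    x ∈ H.map (MulAut.conj g).toMonoidHom ↔ g⁻¹ * x * g ∈ H := by
  rw [← MulAut.conj_symm_apply]
  exact mem_map_equiv

theorem coe_map_conj (H : Subgroup U) (g : U) :
    (H.map (MulAut.conj g).toMonoidHom : Set U) = (fun x => g⁻¹ * x * g) ⁻¹' H :=
  Set.ext fun _ => mem_map_conj

theorem iInf_map_conj_out_le_normalCore {K P W : Subgroup U}
    (h : ∀ w ∈ W, P ≤ K.map (MulAut.conj w).toMonoidHom) :
    ⨅ q : U ⧸ W, P.map (MulAut.conj q.out).toMonoidHom ≤ K.normalCore := by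
  rw [normalCore_eq_iInf_map_conj]
  refine le_iInf fun g => ?_
  obtain ⟨w, hw⟩ := QuotientGroup.mk_out_eq_mul W g
  have hPw : P.map (MulAut.conj (w : U)).toMonoidHom ≤ K := by
    rintro _ ⟨x, hx, rfl⟩
    simpa using mem_map_conj.mp (h _ (inv_mem w.2) hx)
  calc ⨅ q : U ⧸ W, P.map (MulAut.conj q.out).toMonoidHom
      ≤ P.map (MulAut.conj (g * w)).toMonoidHom := hw ▸ iInf_le _ (g : U ⧸ W)
    _ = (P.map (MulAut.conj (w : U)).toMonoidHom).map (MulAut.conj g).toMonoidHom :=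
        (map_conj_map_conj ..).symm
    _ ≤ K.map (MulAut.conj g).toMonoidHom := map_mono hPw

theorem relIndex_inf_map_conj_ne_zero_of_normal_le {K L : Subgroup U} [L.Normal] (hLK : L ≤ K)
    (hL : L.relIndex K ≠ 0) (u : U) :
    (K.map (MulAut.conj u).toMonoidHom ⊓ K).relIndex K ≠ 0 ∧
      (K.map (MulAut.conj u).toMonoidHom ⊓ K).relIndex
        (K.map (MulAut.conj u).toMonoidHom) ≠ 0 := by
  have hLinf : L ≤ K.map (MulAut.conj u).toMonoidHom ⊓ K :=
    le_inf ((Normal.map_conj_eq L u).symm.trans_le (map_mono hLK)) hLK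
  have hLu : L.relIndex (K.map (MulAut.conj u).toMonoidHom) = L.relIndex K := by
    conv_lhs => rw [← (Normal.map_conj_eq L u : L.map (MulAut.conj u).toMonoidHom = L)]
    exact relIndex_map_map_of_injective _ _ (MulAut.conj u).injective
  exact ⟨fun h => hL (relIndex_eq_zero_of_le_left hLinf h),
    fun h => hL (hLu ▸ relIndex_eq_zero_of_le_left hLinf h)⟩

end Group

section TopologicalGroup

variable {U : Type*} [Group U] [TopologicalSpace U] [IsTopologicalGroup U]

theorem isClosed_map_conj {H : Subgroup U} (hH : IsClosed (H : Set U)) (g : U) :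
    IsClosed (H.map (MulAut.conj g).toMonoidHom : Set U) := by
  rw [coe_map_conj]
  exact hH.preimage (by fun_prop)

theorem isOpen_map_conj {H : Subgroup U} (hH : IsOpen (H : Set U)) (g : U) :
    IsOpen (H.map (MulAut.conj g).toMonoidHom : Set U) := by
  rw [coe_map_conj]
  exact hH.preimage (by fun_prop)

theorem isOpen_subgroupOf_of_isClosed_of_relIndex_ne_zero {H K : Subgroup U}
    (hH : IsClosed (H : Set U)) (hHK : H.relIndex K ≠ 0) : IsOpen (H.subgroupOf K : Set K) :=
  have : (H.subgroupOf K).FiniteIndex := ⟨hHK⟩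
  isOpen_of_isClosed_of_finiteIndex _ (hH.preimage continuous_subtype_val)

theorem relIndex_ne_zero_of_isOpen_subgroupOf {H K : Subgroup U} (hK : IsCompact (K : Set U))
    (hH : IsOpen (H.subgroupOf K : Set K)) : H.relIndex K ≠ 0 :=
  have : CompactSpace K := isCompact_iff_compactSpace.mp hK
  have := quotient_finite_of_isOpen _ hH
  index_ne_zero_of_finite

/-- `uVu⁻¹` is open, hence of finite index, so it cuts the finite-index subgroup `uKu⁻¹ ∩ K`
of `K` down to a closed subgroup that still has finite index in `K`. -/
theorem isOpen_subgroupOf_map_conj_inf [CompactSpace U] {K : Subgroup U}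
    (hK : IsClosed (K : Set U))
    (V : OpenSubgroup U) {u : U} (hu : (K.map (MulAut.conj u).toMonoidHom ⊓ K).relIndex K ≠ 0) :
    IsOpen (((K ⊓ V).map (MulAut.conj u).toMonoidHom).subgroupOf K : Set K) := by
  rw [map_inf _ _ _ (MulAut.conj u).injective]
  have hVu := isOpen_map_conj V.isOpen u
  refine isOpen_subgroupOf_of_isClosed_of_relIndex_ne_zero
    ((isClosed_map_conj hK u).inter (isClosed_of_isOpen _ hVu)) ?_
  have := quotient_finite_of_isOpen _ hVu
  have : (V.toSubgroup.map (MulAut.conj u).toMonoidHom).FiniteIndex :=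
    finiteIndex_of_finite_quotient
  exact relIndex_inf_ne_zero (inf_relIndex_right (K.map (MulAut.conj u).toMonoidHom) K ▸ hu)
    (isFiniteRelIndex_of_finiteIndex (K := K)).relIndex_ne_zero

end TopologicalGroup

section Profinite

variable {U : Type*} [Group U] [TopologicalSpace U] [IsTopologicalGroup U] [CompactSpace U]
  [TotallyDisconnectedSpace U]

theorem exists_openSubgroup_nhds_one_basis [FirstCountableTopology U] :
    ∃ V : ℕ → OpenSubgroup U,
      (𝓝 (1 : U)).HasBasis (fun _ => True) (fun n => (V n : Set U)) := by
  obtain ⟨B, hB⟩ := (𝓝 (1 : U)).exists_antitone_basis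
  have : ∀ n, ∃ V : OpenSubgroup U, (V : Set U) ⊆ B n := fun n => by
    obtain ⟨O, hOB, hO, h1O⟩ := mem_nhds_iff.mp (hB.mem n)
    obtain ⟨V, hV⟩ := ProfiniteGrp.exist_openNormalSubgroup_sub_open_nhds_of_one hO h1O
    exact ⟨V.toOpenSubgroup, hV.trans hOB⟩
  choose V hV using this
  exact ⟨V, hB.toHasBasis.to_hasBasis (fun n _ => ⟨n, trivial, hV n⟩)
    fun n _ => hB.toHasBasis.mem_iff.mp (V n).mem_nhds_one⟩

theorem exists_mul_mem_of_iUnion_eq_univ [T2Space U] {ι : Type*} [Countable ι] {S : ι → Set U}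
    (hS : ∀ i, IsClosed (S i)) (hcover : ⋃ i, S i = Set.univ) :
    ∃ i v, ∃ W : OpenSubgroup U, ∀ w ∈ W, v * w ∈ S i := by
  obtain ⟨i, v, hv⟩ := nonempty_interior_of_iUnion_of_closed hS hcover
  have hO : IsOpen ((v * ·) ⁻¹' interior (S i)) :=
    isOpen_interior.preimage (continuous_const_mul v)
  obtain ⟨W, hW⟩ :=
    ProfiniteGrp.exist_openNormalSubgroup_sub_open_nhds_of_one hO (by simpa using hv)
  exact ⟨i, v, W.toOpenSubgroup, fun w hw => interior_subset (hW hw)⟩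

theorem exists_inf_openSubgroup_le_map_conj [T2Space U] [FirstCountableTopology U]
    {K : Subgroup U} (hK : IsClosed (K : Set U))
    (hcomm : ∀ u : U, (K.map (MulAut.conj u).toMonoidHom ⊓ K).relIndex K ≠ 0) :
    ∃ (V W : OpenSubgroup U) (v : U), ∀ w ∈ W,
      K ⊓ V ≤ K.map (MulAut.conj (v * w)).toMonoidHom := by
  obtain ⟨V, hV⟩ := exists_openSubgroup_nhds_one_basis (U := U)
  let S (n : ℕ) : Set U := {u | K ⊓ V n ≤ K.map (MulAut.conj u).toMonoidHom}
  have hS (n : ℕ) : IsClosed (S n) := by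
    have : S n = ⋂ x ∈ K ⊓ V n, (fun u => u⁻¹ * x * u) ⁻¹' K := by
      ext u
      simp only [S, Set.mem_ofPred_eq, Set.mem_iInter, Set.mem_preimage, SetLike.le_def, mem_inf,
        mem_map_conj, SetLike.mem_coe, and_imp]
    rw [this]
    exact isClosed_biInter fun x _ => hK.preimage (by fun_prop)
  have hcover : ⋃ n, S n = Set.univ := by
    refine Set.iUnion_eq_univ_iff.mpr fun u => ?_
    have hopen := isOpen_subgroupOf_of_isClosed_of_relIndex_ne_zero
      ((isClosed_map_conj hK u).inter hK) (hcomm u)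
    obtain ⟨O, hO, hOsub⟩ := (mem_nhds_subtype _ _ _).mp (hopen.mem_nhds (one_mem _))
    obtain ⟨n, -, hn⟩ := hV.mem_iff.mp hO
    exact ⟨n, fun x hx => (@hOsub ⟨x, hx.1⟩ (hn hx.2)).1⟩
  obtain ⟨n, v, W, hW⟩ := exists_mul_mem_of_iUnion_eq_univ hS hcover
  exact ⟨V n, W, v, hW⟩

theorem isOpen_normalCore_subgroupOf [T2Space U] [FirstCountableTopology U]
    {K : Subgroup U} (hK : IsClosed (K : Set U))
    (hcomm : ∀ u : U, (K.map (MulAut.conj u).toMonoidHom ⊓ K).relIndex K ≠ 0) :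
    IsOpen (K.normalCore.subgroupOf K : Set K) := by
  obtain ⟨V, W, v, hW⟩ := exists_inf_openSubgroup_le_map_conj hK hcomm
  have hP (w : U) (hw : w ∈ W) :
      (K ⊓ V).map (MulAut.conj v⁻¹).toMonoidHom ≤ K.map (MulAut.conj w).toMonoidHom := by
    have := map_mono (f := (MulAut.conj v⁻¹).toMonoidHom) (hW w hw)
    rwa [map_conj_map_conj, inv_mul_cancel_left] at this
  refine isOpen_mono (subgroupOf_mono K (iInf_map_conj_out_le_normalCore hP)) ?_
  rw [subgroupOf, comap_iInf, coe_iInf]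
  refine isOpen_iInter_of_finite fun q => ?_
  rw [map_conj_map_conj]
  exact isOpen_subgroupOf_map_conj_inf hK V (hcomm _)

end Profinite

end Subgroup

/-- A closed subgroup `K` of a first-countable profinite group `U` is commensurated by `U`
(every conjugate `uKu⁻¹` is commensurate with `K`) if and only if `U` normalises an open
subgroup of `K`. -/
theorem stmt_15 {U : Type*} [Group U] [TopologicalSpace U] [IsTopologicalGroup U]
    [CompactSpace U] [TotallyDisconnectedSpace U] [T2Space U]
    [FirstCountableTopology U]
    (K : Subgroup U) (hK : IsClosed (K : Set U)) :
    (∀ u : U,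
        (Subgroup.map (MulAut.conj u).toMonoidHom K ⊓ K).relIndex K ≠ 0 ∧
        (Subgroup.map (MulAut.conj u).toMonoidHom K ⊓ K).relIndex
          (Subgroup.map (MulAut.conj u).toMonoidHom K) ≠ 0) ↔
      (∃ L : Subgroup U, L ≤ K ∧ L.Normal ∧ IsOpen {x : K | (x : U) ∈ L}) := by
  constructor
  · intro hcomm
    exact ⟨K.normalCore, K.normalCore_le, K.normalCore_normal,
      isOpen_normalCore_subgroupOf hK fun u => (hcomm u).1⟩
  · rintro ⟨L, hLK, hL, hLopen⟩
    exact relIndex_inf_map_conj_ne_zero_of_normal_le hLK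
      (relIndex_ne_zero_of_isOpen_subgroupOf hK.isCompact hLopen)
end

section
/- Let G be a compact topological group with trivial centre and suppose G = G₁ × ⋯ × G_n is an internal direct product of finitely many directly indecomposable closed subgroups. Then every indecomposable direct factor of G equals some G_i; consequently G has exactly 2ⁿ direct factors, and the set {G₁,…,G_n} is permuted by every automorphism of G. -/
/-- `H` is a direct factor of the ambient topological group: `H` is closed and
`G = H × C_G(H)` internally. -/
def IsDirectFactor {G : Type*} [Group G] [TopologicalSpace G] (H : Subgroup G) : Prop :=
  IsClosed (H : Set G) ∧ H ⊓ Subgroup.centralizer (H : Set G) = ⊥ ∧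
    H ⊔ Subgroup.centralizer (H : Set G) = ⊤

/-- `H` is (non-trivial and) directly indecomposable: it admits no internal direct product
decomposition into two non-trivial subgroups. -/
def IsIndecomposable {G : Type*} [Group G] (H : Subgroup G) : Prop :=
  H ≠ ⊥ ∧ ¬ ∃ B C : Subgroup G, B ≤ H ∧ C ≤ H ∧ B ≠ ⊥ ∧ C ≠ ⊥ ∧ B ⊓ C = ⊥ ∧ B ⊔ C = H ∧
    (∀ x ∈ B, ∀ y ∈ C, x * y = y * x)

/-!
With trivial centre, a subgroup `K` with `K ⊔ C(K) = G` is normal and equals `C(C(K))`; in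
particular it is closed, so it is a direct factor. Two such subgroups `N`, `K` split each
other, `N = (N ⊓ K) ⊔ (N ⊓ C(K))`, so an indecomposable factor `Aᵢ` either lies in `K` or meets
it trivially, and `K` is the product of the `Aᵢ` it contains. Hence the direct factors are
exactly the products `⨆ i ∈ s, Aᵢ` over the subsets `s` of indices, the indecomposable ones are
the `Aᵢ` themselves, and an automorphism, which maps direct factors to direct factors and
preserves indecomposability, permutes the `Aᵢ`.
-/

open Subgroup

theorem biSup_sup_biSup_compl {α ι : Type*} [CompleteLattice α] (f : ι → α) (s : Set ι) :
    (⨆ i ∈ s, f i) ⊔ ⨆ i ∈ sᶜ, f i = ⨆ i, f i := by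
  rw [← iSup_union, Set.union_compl_self, iSup_univ]

namespace Subgroup

variable {G : Type*} [Group G]

theorem centralizer_sup (H K : Subgroup G) :
    centralizer ((H ⊔ K : Subgroup G) : Set G) =
      centralizer (H : Set G) ⊓ centralizer (K : Set G) := by
  rw [sup_eq_closure, centralizer_closure]
  exact SetLike.ext' Set.centralizer_union

theorem le_centralizer_of_disjoint_s16 {H K : Subgroup G} [H.Normal] [K.Normal] (h : Disjoint H K) :
    H ≤ centralizer K :=
  fun x hx y hy => commute_of_normal_of_disjoint K H ‹_› ‹_› h.symm y x hy hx

/-- Conjugation by `g` fixes `k * l` and preserves `K` and `L`, so by uniqueness of the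
factorisation in `K ⊔ L` it fixes `k`. -/
theorem commute_of_commute_mul {K L : Subgroup G} [K.Normal] [L.Normal] (h : Disjoint K L)
    {g k l : G} (hk : k ∈ K) (hl : l ∈ L) (hg : Commute g (k * l)) : Commute g k := by
  have hconj : g * k * g⁻¹ * (g * l * g⁻¹) = k * l := by
    rw [show g * k * g⁻¹ * (g * l * g⁻¹) = g * (k * l) * g⁻¹ by group, hg.eq,
      mul_inv_cancel_right]
  have := mul_injective_of_disjoint h (a₁ := (⟨_, ‹K.Normal›.conj_mem k hk g⟩,
    ⟨_, ‹L.Normal›.conj_mem l hl g⟩)) (a₂ := (⟨k, hk⟩, ⟨l, hl⟩)) hconj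
  exact mul_inv_eq_iff_eq_mul.1 (congrArg (fun p => (p.1 : G)) this)

theorem le_of_sup_eq_top_of_disjoint {H K L : Subgroup G} [L.Normal] (hHK : H ≤ K)
    (hsup : H ⊔ L = ⊤) (hKL : Disjoint K L) : K ≤ H := by
  intro k hk
  obtain ⟨h, hh, l, hl, rfl⟩ := mem_sup_of_normal_right.1 (hsup ▸ mem_top k)
  have hlK : l ∈ K := by simpa using K.mul_mem (K.inv_mem (hHK hh)) hk
  rw [disjoint_def.1 hKL hlK hl, mul_one]
  exact hh

theorem normal_of_sup_centralizer_eq_top {K : Subgroup G} (hK : K ⊔ centralizer K = ⊤) :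
    K.Normal := by
  rw [← normalizer_eq_top_iff, eq_top_iff, ← hK]
  exact sup_le le_normalizer (centralizer_le_normalizer _)

theorem centralizer_inf_centralizer_eq_bot (hZ : center G = ⊥) {H K : Subgroup G}
    (h : H ⊔ K = ⊤) : centralizer (H : Set G) ⊓ centralizer (K : Set G) = ⊥ := by
  rw [← centralizer_sup, h, coe_top, centralizer_univ, hZ]

theorem inf_centralizer_eq_bot (hZ : center G = ⊥) {K : Subgroup G}
    (hK : K ⊔ centralizer K = ⊤) : K ⊓ centralizer K = ⊥ :=
  le_bot_iff.1 <| (centralizer_inf_centralizer_eq_bot hZ hK).le.trans' <| by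
    rw [inf_comm]
    exact inf_le_inf_left _ (le_centralizer_iff.1 le_rfl)

theorem centralizer_centralizer_eq (hZ : center G = ⊥) {K : Subgroup G}
    (hK : K ⊔ centralizer K = ⊤) : centralizer (centralizer (K : Set G) : Set G) = K := by
  have := normal_of_sup_centralizer_eq_top hK
  refine le_antisymm (le_of_sup_eq_top_of_disjoint (le_centralizer_iff.1 le_rfl) hK ?_)
    (le_centralizer_iff.1 le_rfl)
  rw [disjoint_comm, disjoint_iff]
  exact centralizer_inf_centralizer_eq_bot hZ hK

theorem isClosed_of_sup_centralizer_eq_top [TopologicalSpace G] [SeparatelyContinuousMul G]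
    [T2Space G] (hZ : center G = ⊥) {K : Subgroup G} (hK : K ⊔ centralizer K = ⊤) :
    IsClosed (K : Set G) := by
  rw [← centralizer_centralizer_eq hZ hK]
  exact Set.isClosed_centralizer _

theorem inf_sup_inf_centralizer_eq (hZ : center G = ⊥) {N K : Subgroup G}
    (hN : N ⊔ centralizer N = ⊤) (hK : K ⊔ centralizer K = ⊤) :
    N ⊓ K ⊔ N ⊓ centralizer K = N := by
  have := normal_of_sup_centralizer_eq_top hK
  refine le_antisymm (sup_le inf_le_left inf_le_left) fun x hx => ?_
  obtain ⟨k, hk, c, hc, rfl⟩ := mem_sup_of_normal_right.1 (hK ▸ mem_top x)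
  have hkN : k ∈ N := by
    rw [← centralizer_centralizer_eq hZ hN]
    exact fun y hy => (commute_of_commute_mul (disjoint_iff.2 (inf_centralizer_eq_bot hZ hK))
      hk hc (hy _ hx).symm).eq
  have hcN : c ∈ N := by simpa using N.mul_mem (N.inv_mem hkN) hx
  exact mul_mem_sup ⟨hkN, hk⟩ ⟨hcN, hc⟩

theorem centralizer_map_equiv {G' : Type*} [Group G'] (e : G ≃* G') (K : Subgroup G) :
    centralizer (K.map e.toMonoidHom : Set G') = (centralizer (K : Set G)).map e.toMonoidHom := by
  ext x
  simp only [mem_centralizer_iff, map_equiv_eq_comap_symm', SetLike.mem_coe, mem_comap,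
    MulEquiv.coe_toMonoidHom]
  rw [e.symm.surjective.forall]
  simp only [← map_mul, e.symm.injective.eq_iff]

theorem map_sup_centralizer_eq_top {G' : Type*} [Group G'] (e : G ≃* G') {K : Subgroup G}
    (hK : K ⊔ centralizer K = ⊤) :
    K.map e.toMonoidHom ⊔ centralizer (K.map e.toMonoidHom : Set G') = ⊤ := by
  rw [centralizer_map_equiv, ← map_sup, hK, map_top_of_surjective _ e.surjective]

end Subgroup

section Indecomposable

variable {G : Type*} [Group G]

theorem isDirectFactor_iff [TopologicalSpace G] [SeparatelyContinuousMul G] [T2Space G]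
    (hZ : center G = ⊥) {K : Subgroup G} : IsDirectFactor K ↔ K ⊔ centralizer K = ⊤ :=
  ⟨fun h => h.2.2,
    fun h => ⟨isClosed_of_sup_centralizer_eq_top hZ h, inf_centralizer_eq_bot hZ h, h⟩⟩

theorem IsIndecomposable.eq_bot_or_eq_bot {H B C : Subgroup G} (hH : IsIndecomposable H)
    (hsup : B ⊔ C = H) (hBC : Disjoint B C) (hcomm : C ≤ centralizer B) :
    B = ⊥ ∨ C = ⊥ := by
  by_contra! h
  exact hH.2 ⟨B, C, hsup ▸ le_sup_left, hsup ▸ le_sup_right, h.1, h.2, hBC.eq_bot, hsup,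
    fun x hx y hy => hcomm hy x hx⟩

theorem IsIndecomposable.le_or_disjoint (hZ : center G = ⊥) {N K : Subgroup G}
    (hN : IsIndecomposable N) (hN' : N ⊔ centralizer N = ⊤) (hK : K ⊔ centralizer K = ⊤) :
    N ≤ K ∨ Disjoint N K := by
  have hsplit := inf_sup_inf_centralizer_eq hZ hN' hK
  have hdisj : Disjoint (N ⊓ K) (N ⊓ centralizer K) :=
    (disjoint_iff.2 (inf_centralizer_eq_bot hZ hK)).mono inf_le_right inf_le_right
  rcases hN.eq_bot_or_eq_bot hsplit hdisj (inf_le_right.trans (centralizer_le inf_le_right))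
    with h | h
  · exact .inr (disjoint_iff.2 h)
  · rw [← hsplit, h, sup_bot_eq]
    exact .inl inf_le_right

theorem IsIndecomposable.map_equiv {G' : Type*} [Group G'] {H : Subgroup G}
    (hH : IsIndecomposable H) (e : G ≃* G') : IsIndecomposable (H.map e.toMonoidHom) := by
  refine ⟨(map_eq_bot_iff_of_injective _ e.injective).not.2 hH.1, ?_⟩
  rintro ⟨B, C, hB, hC, hB0, hC0, hBC, hsup, hcomm⟩
  set Φ := e.symm.mapSubgroup
  have hΦH : Φ (H.map e.toMonoidHom) = H := e.mapSubgroup.symm_apply_apply H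
  refine hH.2 ⟨Φ B, Φ C, hΦH ▸ Φ.monotone hB, hΦH ▸ Φ.monotone hC,
    (map_eq_bot_iff_of_injective _ e.symm.injective).not.2 hB0,
    (map_eq_bot_iff_of_injective _ e.symm.injective).not.2 hC0,
    by rw [← Φ.map_inf, hBC, Φ.map_bot], by rw [← Φ.map_sup, hsup, hΦH], ?_⟩
  rintro _ ⟨x, hx, rfl⟩ _ ⟨y, hy, rfl⟩
  simp only [MonoidHom.coe_coe, ← map_mul, hcomm x hx y hy]

end Indecomposable

namespace iSupIndep

variable {G : Type*} [Group G] {ι : Type*} {A : ι → Subgroup G}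

theorem le_centralizer_of_ne (hindep : iSupIndep A) (hnorm : ∀ i, (A i).Normal) {i j : ι}
    (hij : i ≠ j) : A i ≤ centralizer (A j) :=
  have := hnorm i
  have := hnorm j
  le_centralizer_of_disjoint_s16 (hindep.pairwiseDisjoint hij)

theorem biSup_compl_le_centralizer (hindep : iSupIndep A) (hnorm : ∀ i, (A i).Normal)
    (s : Set ι) : ⨆ j ∈ sᶜ, A j ≤ centralizer (⨆ i ∈ s, A i : Subgroup G) :=
  iSup₂_le fun _ hj => le_centralizer_iff.2 <| iSup₂_le fun _ hi =>
    hindep.le_centralizer_of_ne hnorm (ne_of_mem_of_not_mem hi hj)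

theorem biSup_sup_centralizer_eq_top (hindep : iSupIndep A) (hnorm : ∀ i, (A i).Normal)
    (hsup : ⨆ i, A i = ⊤) (s : Set ι) :
    (⨆ i ∈ s, A i) ⊔ centralizer (⨆ i ∈ s, A i : Subgroup G) = ⊤ :=
  top_le_iff.1 <| ((biSup_sup_biSup_compl A s).trans hsup).ge.trans <|
    sup_le_sup_left (hindep.biSup_compl_le_centralizer hnorm s) _

theorem sup_centralizer_eq_top (hindep : iSupIndep A) (hnorm : ∀ i, (A i).Normal)
    (hsup : ⨆ i, A i = ⊤) (i : ι) : A i ⊔ centralizer (A i) = ⊤ := by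
  simpa using hindep.biSup_sup_centralizer_eq_top hnorm hsup {i}

theorem le_biSup_iff (hindep : iSupIndep A) {i : ι} (hi : A i ≠ ⊥) {s : Set ι} :
    A i ≤ ⨆ j ∈ s, A j ↔ i ∈ s :=
  ⟨fun h => by_contra fun his => hi (disjoint_self.1 ((hindep.disjoint_biSup his).mono_right h)),
    fun his => le_iSup₂ (f := fun j _ => A j) i his⟩

theorem eq_biSup_of_sup_centralizer_eq_top (hindep : iSupIndep A) (hZ : center G = ⊥)
    (hnorm : ∀ i, (A i).Normal) (hsup : ⨆ i, A i = ⊤) (hindec : ∀ i, IsIndecomposable (A i))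
    {K : Subgroup G} (hK : K ⊔ centralizer K = ⊤) : K = ⨆ i ∈ {i | A i ≤ K}, A i := by
  set s := {i | A i ≤ K}
  have := normal_of_sup_centralizer_eq_top hK
  have : (⨆ i ∈ sᶜ, A i).Normal := biSup_normal _ _ fun i _ => hnorm i
  have hcompl : ⨆ i ∈ sᶜ, A i ≤ centralizer K := iSup₂_le fun i hi =>
    have := hnorm i
    le_centralizer_of_disjoint_s16 <| ((hindec i).le_or_disjoint hZ
      (hindep.sup_centralizer_eq_top hnorm hsup i) hK).resolve_left hi
  have hle : ⨆ i ∈ s, A i ≤ K := iSup₂_le fun _ hi => hi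
  refine le_antisymm (le_of_sup_eq_top_of_disjoint hle ((biSup_sup_biSup_compl A s).trans hsup)
    ?_) hle
  exact (disjoint_iff.2 (inf_centralizer_eq_bot hZ hK)).mono_right hcompl

theorem exists_eq_of_isIndecomposable (hindep : iSupIndep A) (hZ : center G = ⊥)
    (hnorm : ∀ i, (A i).Normal) (hsup : ⨆ i, A i = ⊤) (hindec : ∀ i, IsIndecomposable (A i))
    {K : Subgroup G} (hK : K ⊔ centralizer K = ⊤) (hKi : IsIndecomposable K) :
    ∃ i, K = A i := by
  obtain ⟨i, hi⟩ : ∃ i, A i ≤ K := by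
    by_contra! h
    refine hKi.1 ?_
    rw [hindep.eq_biSup_of_sup_centralizer_eq_top hZ hnorm hsup hindec hK]
    simp [h]
  refine ⟨i, le_antisymm ?_ hi⟩
  refine (hKi.le_or_disjoint hZ hK (hindep.sup_centralizer_eq_top hnorm hsup i)).resolve_right
    fun hd => (hindec i).1 ?_
  exact disjoint_self.1 (hd.mono_left hi)

theorem bijective_biSup (hindep : iSupIndep A) (hZ : center G = ⊥) (hnorm : ∀ i, (A i).Normal)
    (hsup : ⨆ i, A i = ⊤) (hindec : ∀ i, IsIndecomposable (A i)) :
    Function.Bijective fun s : Set ι => (⟨⨆ i ∈ s, A i,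
      hindep.biSup_sup_centralizer_eq_top hnorm hsup s⟩ :
        {K : Subgroup G // K ⊔ centralizer K = ⊤}) := by
  refine ⟨fun s t h => Set.ext fun i => ?_, fun ⟨K, hK⟩ =>
    ⟨_, Subtype.ext (hindep.eq_biSup_of_sup_centralizer_eq_top hZ hnorm hsup hindec hK).symm⟩⟩
  rw [← hindep.le_biSup_iff (hindec i).1, ← hindep.le_biSup_iff (hindec i).1 (s := t)]
  exact iff_of_eq (congrArg (A i ≤ ·.1) h)

end iSupIndep

theorem stmt_16_general {G : Type*} [Group G] [TopologicalSpace G] [IsTopologicalGroup G]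
    [T2Space G]
    (hZ : Subgroup.center G = ⊥) (n : ℕ) (A : Fin n → Subgroup G)
    (hnorm : ∀ i, (A i).Normal)
    (hindep : iSupIndep A)
    (hsup : ⨆ i, A i = ⊤)
    (hindec : ∀ i, IsIndecomposable (A i)) :
    (∀ K : Subgroup G, IsDirectFactor K → IsIndecomposable K → ∃ i, K = A i) ∧
      Nat.card {K : Subgroup G // IsDirectFactor K} = 2 ^ n ∧
      (∀ φ : G ≃* G, Continuous φ → Continuous φ.symm →
        ∀ i, ∃ j, Subgroup.map φ.toMonoidHom (A i) = A j) := by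
  have hfac (K : Subgroup G) : IsDirectFactor K ↔ K ⊔ centralizer K = ⊤ :=
    isDirectFactor_iff hZ
  refine ⟨fun K hK hKi => hindep.exists_eq_of_isIndecomposable hZ hnorm hsup hindec
    ((hfac K).1 hK) hKi, ?_, fun φ _ _ i => ?_⟩
  · calc Nat.card {K : Subgroup G // IsDirectFactor K}
        = Nat.card (Set (Fin n)) := Nat.card_congr <| (Equiv.subtypeEquivRight hfac).trans
          (Equiv.ofBijective _ (hindep.bijective_biSup hZ hnorm hsup hindec)).symm
      _ = 2 ^ n := by rw [Nat.card_eq_fintype_card, Fintype.card_set, Fintype.card_fin]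
  · exact hindep.exists_eq_of_isIndecomposable hZ hnorm hsup hindec
      (map_sup_centralizer_eq_top φ (hindep.sup_centralizer_eq_top hnorm hsup i))
      ((hindec i).map_equiv φ)

/-- For a compact group `G` with trivial centre written as an internal direct product of
finitely many indecomposable closed normal subgroups `A 1, …, A n`: every indecomposable
direct factor of `G` is one of the `A i`; `G` has exactly `2 ^ n` direct factors; and every
topological automorphism of `G` permutes the family `{A i}`. -/
theorem stmt_16 {G : Type*} [Group G] [TopologicalSpace G] [IsTopologicalGroup G]
    [CompactSpace G] [T2Space G]
    (hZ : Subgroup.center G = ⊥) (n : ℕ) (A : Fin n → Subgroup G)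
    (hclosed : ∀ i, IsClosed ((A i : Subgroup G) : Set G))
    (hnorm : ∀ i, (A i).Normal)
    (hindep : iSupIndep A)
    (hsup : ⨆ i, A i = ⊤)
    (hindec : ∀ i, IsIndecomposable (A i)) :
    (∀ K : Subgroup G, IsDirectFactor K → IsIndecomposable K → ∃ i, K = A i) ∧
      Nat.card {K : Subgroup G // IsDirectFactor K} = 2 ^ n ∧
      (∀ φ : G ≃* G, Continuous φ → Continuous φ.symm →
        ∀ i, ∃ j, Subgroup.map φ.toMonoidHom (A i) = A j) :=
  stmt_16_general hZ n A hnorm hindep hsup hindec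
end

section
/- Let G be a compact group with trivial centre that is not finitely decomposable (i.e. G cannot be written as a finite internal direct product of indecomposable closed subgroups). Then G is topologically isomorphic to an infinite Cartesian product of non-trivial closed subgroups, and G has uncountably many closed direct factors up to commensurability. -/
/-!
Since `Z(G) = 1`, `G` itself is a direct factor. A direct factor `K` that is not finitely
decomposable is not indecomposable, and replacing the two pieces of a splitting of `K` by
centralizers inside `K` yields two closed direct factors, one of which is again not finitely
decomposable. Iterating gives pairwise commuting nontrivial closed direct factors `B₀, B₁, …`.
After enlarging `B₀` by the common centralizer of all `Bₙ`, the coordinate projections give a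
continuous bijective homomorphism `G → ∏ Bₙ`: it is onto because the partial products of any
point of the product converge to it and compact images are closed. For `A ⊆ ℕ` the subproduct
over `A` is a direct factor, and it has infinite index over the subproduct over `A'` as soon as
`A \ A'` is infinite. The sets of codes of the prefixes of binary sequences form an uncountable
family of subsets of `ℕ` with pairwise infinite differences, so they give uncountably many direct
factors, no two of them commensurable.
-/

/-- `H` is a direct factor of the ambient topological group: `H` is closed and
`G = H × C_G(H)` internally. -/
def IsDirectFactor' {G : Type*} [Group G] [TopologicalSpace G] (H : Subgroup G) : Prop :=
  IsClosed (H : Set G) ∧ H ⊓ Subgroup.centralizer (H : Set G) = ⊥ ∧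
    H ⊔ Subgroup.centralizer (H : Set G) = ⊤

/-- `H` is (non-trivial and) directly indecomposable. -/
def IsIndecomposable' {G : Type*} [Group G] (H : Subgroup G) : Prop :=
  H ≠ ⊥ ∧ ¬ ∃ B C : Subgroup G, B ≤ H ∧ C ≤ H ∧ B ≠ ⊥ ∧ C ≠ ⊥ ∧ B ⊓ C = ⊥ ∧ B ⊔ C = H ∧
    (∀ x ∈ B, ∀ y ∈ C, x * y = y * x)

open Subgroup Pointwise

section Lattice

variable {α ι κ : Type*} [CompleteLattice α]

theorem disjoint_sup_of_inf_sup_le {a b x c : α} (hab : a ≤ b) (hax : Disjoint a x)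
    (hbx : b ⊓ (x ⊔ c) ≤ x) : Disjoint a (x ⊔ c) :=
  disjoint_iff.mpr <| eq_bot_iff.mpr <|
    (le_inf inf_le_left ((inf_le_inf_right _ hab).trans hbx)).trans (disjoint_iff.mp hax).le

theorem iSupIndep.sum_elim {f : ι → α} {g : κ → α} (hf : iSupIndep f) (hg : iSupIndep g)
    (hfg : ∀ x ≤ ⨆ i, f i, (⨆ i, f i) ⊓ (x ⊔ ⨆ j, g j) ≤ x)
    (hgf : ∀ y ≤ ⨆ j, g j, (⨆ j, g j) ⊓ (y ⊔ ⨆ i, f i) ≤ y) :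
    iSupIndep (Sum.elim f g) := by
  rintro (i | j)
  · refine (disjoint_sup_of_inf_sup_le (le_iSup f i) (hf i)
      (hfg _ (iSup₂_le fun j _ => le_iSup f j))).mono_right (iSup₂_le ?_)
    rintro (j | j) hj
    · exact le_sup_of_le_left (le_iSup₂_of_le j (fun h => hj (h ▸ rfl)) le_rfl)
    · exact le_sup_of_le_right (le_iSup g j)
  · refine (disjoint_sup_of_inf_sup_le (le_iSup g j) (hg j)
      (hgf _ (iSup₂_le fun i _ => le_iSup g i))).mono_right (iSup₂_le ?_)
    rintro (i | i) hi
    · exact le_sup_of_le_right (le_iSup f i)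
    · exact le_sup_of_le_left (le_iSup₂_of_le i (fun h => hi (h ▸ rfl)) le_rfl)

end Lattice

section Group

variable {G : Type*} [Group G]

theorem Subgroup.coe_sup_eq_mul_of_le_centralizer {H K : Subgroup G}
    (h : K ≤ centralizer (H : Set G)) : ((H ⊔ K : Subgroup G) : Set G) = H * K :=
  coe_mul_of_right_le_normalizer_left H K (h.trans (centralizer_le_normalizer _))

theorem Subgroup.centralizer_inf_le_centralizer_sup (H K : Subgroup G) :
    centralizer (H : Set G) ⊓ centralizer K ≤ centralizer ((H ⊔ K : Subgroup G) : Set G) :=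
  le_centralizer_iff.mp <| sup_le (le_centralizer_iff.mp inf_le_left)
    (le_centralizer_iff.mp inf_le_right)

theorem Subgroup.inf_sup_le_of_le_centralizer {B C X : Subgroup G} (hXB : X ≤ B)
    (hCB : C ≤ centralizer (B : Set G)) (hBC : B ⊓ C = ⊥) : B ⊓ (X ⊔ C) ≤ X := by
  intro a ha
  obtain ⟨haB, haXC⟩ := mem_inf.mp ha
  rw [← SetLike.mem_coe, coe_sup_eq_mul_of_le_centralizer
    (hCB.trans (centralizer_le (SetLike.coe_subset_coe.mpr hXB)))] at haXC
  obtain ⟨x, hx, c, hc, rfl⟩ := haXC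
  have hc1 : c ∈ B ⊓ C := ⟨by simpa using mul_mem (inv_mem (hXB hx)) haB, hc⟩
  rw [hBC, mem_bot] at hc1
  simpa [hc1] using hx

end Group

section FinitelyDecomposable

variable {G : Type*} [Group G] [TopologicalSpace G]

def IsFinitelyDecomposable (K : Subgroup G) : Prop :=
  ∃ (n : ℕ) (A : Fin n → Subgroup G),
    (∀ i, IsClosed ((A i : Subgroup G) : Set G)) ∧ (∀ i, (A i).Normal) ∧
      (∀ i, IsIndecomposable' (A i)) ∧ iSupIndep A ∧ ⨆ i, A i = K

theorem isFinitelyDecomposable_bot : IsFinitelyDecomposable (⊥ : Subgroup G) :=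
  ⟨0, Fin.elim0, Fin.rec0, Fin.rec0, Fin.rec0, iSupIndep_subsingleton _, iSup_of_empty _⟩

theorem IsIndecomposable'.isFinitelyDecomposable {K : Subgroup G} (hK : IsIndecomposable' K)
    (hclosed : IsClosed (K : Set G)) (hnormal : K.Normal) : IsFinitelyDecomposable K :=
  ⟨1, fun _ => K, fun _ => hclosed, fun _ => hnormal, fun _ => hK, iSupIndep_subsingleton _,
    iSup_const⟩

theorem IsFinitelyDecomposable.sup {B C : Subgroup G} (hB : IsFinitelyDecomposable B)
    (hC : IsFinitelyDecomposable C) (hBC : B ⊓ C = ⊥) (hCB : C ≤ centralizer (B : Set G)) :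
    IsFinitelyDecomposable (B ⊔ C) := by
  obtain ⟨m, A₁, hcl₁, hn₁, hi₁, hind₁, rfl⟩ := hB
  obtain ⟨k, A₂, hcl₂, hn₂, hi₂, hind₂, rfl⟩ := hC
  let e : Fin (m + k) ≃ Fin m ⊕ Fin k := finSumFinEquiv.symm
  have lift : ∀ P : Subgroup G → Prop, (∀ i, P (A₁ i)) → (∀ j, P (A₂ j)) →
      ∀ i, P ((Sum.elim A₁ A₂ ∘ e) i) := fun P h₁ h₂ i =>
    (Sum.forall (p := fun s => P (Sum.elim A₁ A₂ s))).mpr ⟨h₁, h₂⟩ (e i)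
  refine ⟨m + k, Sum.elim A₁ A₂ ∘ e, lift (fun A => IsClosed (A : Set G)) hcl₁ hcl₂,
    lift Normal hn₁ hn₂, lift IsIndecomposable' hi₁ hi₂,
    (hind₁.sum_elim hind₂ (fun X hX => inf_sup_le_of_le_centralizer hX hCB hBC)
      (fun Y hY => inf_sup_le_of_le_centralizer hY (le_centralizer_iff.mp hCB)
        (by rwa [inf_comm]))).comp e.injective, ?_⟩
  rw [Function.comp_def, e.surjective.iSup_comp (Sum.elim A₁ A₂), iSup_sum]
  rfl

end FinitelyDecomposable

section DirectFactor

variable {G : Type*} [Group G] [TopologicalSpace G]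

theorem isDirectFactor'_top_iff : IsDirectFactor' (⊤ : Subgroup G) ↔ center G = ⊥ := by
  simp only [IsDirectFactor', coe_top, isClosed_univ, centralizer_univ, top_inf_eq, top_sup_eq,
    true_and, and_true]

namespace IsDirectFactor'

variable {H K : Subgroup G}

theorem mul_centralizer_eq_univ (h : IsDirectFactor' H) :
    (H : Set G) * ((centralizer (H : Set G) : Subgroup G) : Set G) = Set.univ := by
  rw [← coe_sup_eq_mul_of_le_centralizer le_rfl, h.2.2, coe_top]

theorem normal (h : IsDirectFactor' H) : H.Normal := by
  refine ⟨fun n hn g => ?_⟩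
  obtain ⟨x, hx, y, hy, rfl⟩ := h.mul_centralizer_eq_univ.symm ▸ Set.mem_univ g
  have hyn : y * n * y⁻¹ = n := by rw [← mem_centralizer_iff.mp hy n hn, mul_inv_cancel_right]
  rw [show x * y * n * (x * y)⁻¹ = x * (y * n * y⁻¹) * x⁻¹ by group, hyn]
  exact mul_mem (mul_mem hx hn) (inv_mem hx)

theorem of_sup (hK : IsDirectFactor' K) {B C : Subgroup G} (hB : IsClosed (B : Set G))
    (hBC : B ⊔ C = K) (hCB : C ≤ centralizer (B : Set G)) : IsDirectFactor' B := by
  have hBK : B ≤ K := hBC ▸ le_sup_left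
  refine ⟨hB, eq_bot_iff.mpr fun z hz => ?_, eq_top_iff.mpr ?_⟩
  · obtain ⟨hzB, hzC⟩ := mem_inf.mp hz
    have hzK : z ∈ centralizer (K : Set G) :=
      hBC ▸ centralizer_inf_le_centralizer_sup B C ⟨hzC, le_centralizer_iff.mp hCB hzB⟩
    exact hK.2.1 ▸ mem_inf.mpr ⟨hBK hzB, hzK⟩
  · rw [← hK.2.2]
    exact sup_le (hBC ▸ sup_le le_sup_left (hCB.trans le_sup_right))
      ((centralizer_le (SetLike.coe_subset_coe.mpr hBK)).trans le_sup_right)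

def mulHom (H : Subgroup G) : H × centralizer (H : Set G) →* G :=
  MonoidHom.noncommCoprod H.subtype (centralizer (H : Set G)).subtype fun x y =>
    mem_centralizer_iff.mp y.2 x x.2

theorem bijective_mulHom (h : IsDirectFactor' H) : Function.Bijective (mulHom H) := by
  refine ⟨(injective_iff_map_eq_one _).mpr fun ⟨x, y⟩ hxy => ?_, fun g => ?_⟩
  · have hxy : (x : G) * y = 1 := hxy
    have hx : (x : G) ∈ H ⊓ centralizer (H : Set G) :=
      ⟨x.2, eq_inv_of_mul_eq_one_left hxy ▸ (centralizer (H : Set G)).inv_mem y.2⟩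
    rw [h.2.1, mem_bot] at hx
    rw [hx, one_mul] at hxy
    exact Prod.ext (Subtype.ext hx) (Subtype.ext hxy)
  · obtain ⟨x, hx, y, hy, rfl⟩ := h.mul_centralizer_eq_univ.symm ▸ Set.mem_univ g
    exact ⟨(⟨x, hx⟩, ⟨y, hy⟩), rfl⟩

noncomputable def mulEquiv (h : IsDirectFactor' H) : H × centralizer (H : Set G) ≃* G :=
  MulEquiv.ofBijective _ h.bijective_mulHom

noncomputable def proj (h : IsDirectFactor' H) : G →* H :=
  (MonoidHom.fst _ _).comp h.mulEquiv.symm.toMonoidHom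

theorem proj_mul (h : IsDirectFactor' H) {x y : G} (hx : x ∈ H)
    (hy : y ∈ centralizer (H : Set G)) : h.proj (x * y) = ⟨x, hx⟩ :=
  congrArg Prod.fst (h.mulEquiv.symm_apply_apply (⟨x, hx⟩, ⟨y, hy⟩))

theorem coe_proj_of_mem (h : IsDirectFactor' H) {x : G} (hx : x ∈ H) : (h.proj x : G) = x := by
  simpa using congrArg Subtype.val (h.proj_mul hx (one_mem _))

theorem proj_eq_one_iff (h : IsDirectFactor' H) {x : G} :
    h.proj x = 1 ↔ x ∈ centralizer (H : Set G) := by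
  obtain ⟨y, hy, z, hz, rfl⟩ := h.mul_centralizer_eq_univ.symm ▸ Set.mem_univ x
  dsimp only
  rw [h.proj_mul hy hz, Subgroup.mk_eq_one]
  refine ⟨fun hy1 => by rwa [hy1, one_mul], fun hyz => ?_⟩
  have hy' : y ∈ H ⊓ centralizer (H : Set G) :=
    ⟨hy, by simpa using mul_mem hyz (inv_mem hz)⟩
  rwa [h.2.1, mem_bot] at hy'

end IsDirectFactor'

variable [ContinuousMul G] [T2Space G]

theorem IsDirectFactor'.exists_split {K : Subgroup G} (hK : IsDirectFactor' K)
    (hKfd : ¬ IsFinitelyDecomposable K) :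
    ∃ B C : Subgroup G, IsDirectFactor' B ∧ B ≠ ⊥ ∧ IsDirectFactor' C ∧
      ¬ IsFinitelyDecomposable C ∧ C ≤ centralizer (B : Set G) ∧ B ≤ K ∧ C ≤ K := by
  have hKne : K ≠ ⊥ := fun h => hKfd (h ▸ isFinitelyDecomposable_bot)
  obtain ⟨B, C, hBK, hCK, hBne, hCne, -, hBC, hcomm⟩ : ∃ B C : Subgroup G, B ≤ K ∧ C ≤ K ∧
      B ≠ ⊥ ∧ C ≠ ⊥ ∧ B ⊓ C = ⊥ ∧ B ⊔ C = K ∧ ∀ x ∈ B, ∀ y ∈ C, x * y = y * x := by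
    by_contra hind
    exact hKfd (IsIndecomposable'.isFinitelyDecomposable ⟨hKne, hind⟩ hK.1 hK.normal)
  -- replacing `B` and `C` by iterated centralizers inside `K` makes them closed
  set B' := K ⊓ centralizer (C : Set G)
  set C' := K ⊓ centralizer (B' : Set G)
  have hBB' : B ≤ B' :=
    le_inf hBK fun x hx => mem_centralizer_iff.mpr fun y hy => (hcomm x hx y hy).symm
  have hCC' : C ≤ C' := le_inf hCK (le_centralizer_iff.mp inf_le_right)
  have hCB' : C' ≤ centralizer (B' : Set G) := inf_le_right
  have hsup : B' ⊔ C' = K := le_antisymm (sup_le inf_le_left inf_le_left)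
    (hBC ▸ sup_le_sup hBB' hCC')
  have hB' : IsDirectFactor' B' :=
    hK.of_sup (hK.1.inter (Set.isClosed_centralizer _)) hsup hCB'
  have hC' : IsDirectFactor' C' :=
    hK.of_sup (hK.1.inter (Set.isClosed_centralizer _)) (sup_comm B' C' ▸ hsup)
      (le_centralizer_iff.mp hCB')
  have hB'C' : B' ⊓ C' = ⊥ := eq_bot_iff.mpr fun z hz => hB'.2.1 ▸ ⟨hz.1, hCB' hz.2⟩
  have hBne' : B' ≠ ⊥ := fun h => hBne (le_bot_iff.mp (h ▸ hBB'))
  have hCne' : C' ≠ ⊥ := fun h => hCne (le_bot_iff.mp (h ▸ hCC'))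
  by_cases hfd : IsFinitelyDecomposable C'
  · have hBfd : ¬ IsFinitelyDecomposable B' := fun hBfd => hKfd (hsup ▸ hBfd.sup hfd hB'C' hCB')
    exact ⟨C', B', hC', hCne', hB', hBfd, le_centralizer_iff.mp hCB', inf_le_left, inf_le_left⟩
  · exact ⟨B', C', hB', hBne', hC', hfd, hCB', inf_le_left, inf_le_left⟩

theorem IsDirectFactor'.exists_pairwise_commute {K : Subgroup G} (hK : IsDirectFactor' K)
    (hKfd : ¬ IsFinitelyDecomposable K) :
    ∃ B : ℕ → Subgroup G, (∀ n, IsDirectFactor' (B n) ∧ B n ≠ ⊥) ∧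
      Pairwise fun m n => B n ≤ centralizer (B m : Set G) := by
  choose! factor rest hsplit using
    fun (L : Subgroup G) (hL : IsDirectFactor' L ∧ ¬ IsFinitelyDecomposable L) =>
      hL.1.exists_split hL.2
  let L : ℕ → Subgroup G := fun n => rest^[n] K
  have hLsucc : ∀ n, L (n + 1) = rest (L n) := fun n => Function.iterate_succ_apply' rest n K
  have hL : ∀ n, IsDirectFactor' (L n) ∧ ¬ IsFinitelyDecomposable (L n) := by
    intro n
    induction n with
    | zero => exact ⟨hK, hKfd⟩
    | succ n ih =>
      obtain ⟨-, -, hC, hCfd, -⟩ := hsplit _ ih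
      exact hLsucc n ▸ ⟨hC, hCfd⟩
  have hLanti : Antitone L := antitone_nat_of_succ_le fun n => by
    obtain ⟨-, -, -, -, -, -, hCL⟩ := hsplit _ (hL n)
    exact hLsucc n ▸ hCL
  have hcomm : ∀ m n, m < n → factor (L n) ≤ centralizer (factor (L m) : Set G) := by
    intro m n hmn
    obtain ⟨-, -, -, -, hCB, -⟩ := hsplit _ (hL m)
    obtain ⟨-, -, -, -, -, hBL, -⟩ := hsplit _ (hL n)
    exact hBL.trans <| (hLanti hmn).trans <| hLsucc m ▸ hCB
  refine ⟨fun n => factor (L n), fun n => ⟨(hsplit _ (hL n)).1, (hsplit _ (hL n)).2.1⟩,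
    fun m n hmn => ?_⟩
  rcases hmn.lt_or_gt with h | h
  · exact hcomm m n h
  · exact le_centralizer_iff.mp (hcomm n m h)

end DirectFactor

section Subproduct

variable {G : Type*} [Group G] {ι : Type*}

theorem Subgroup.inf_centralizer_eq_bot_of_sup_eq_top (hZ : center G = ⊥) {H : Subgroup G}
    (h : H ⊔ centralizer (H : Set G) = ⊤) : H ⊓ centralizer (H : Set G) = ⊥ := by
  refine eq_bot_iff.mpr fun z hz => ?_
  have hzC : z ∈ centralizer ((⊤ : Subgroup G) : Set G) :=
    h ▸ centralizer_inf_le_centralizer_sup _ _ ⟨hz.2, le_centralizer_iff.mp le_rfl hz.1⟩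
  rwa [coe_top, centralizer_univ, hZ] at hzC

-- the subgroup corresponding to `∏ i ∈ A, H i` once `G ≅ ∏ i, H i`
def subproduct (H : ι → Subgroup G) (A : Set ι) : Subgroup G :=
  ⨅ i ∉ A, centralizer (H i : Set G)

variable {H : ι → Subgroup G} {A : Set ι} {i : ι}

theorem le_subproduct (hcomm : Pairwise fun i j => H j ≤ centralizer (H i : Set G))
    (hi : i ∈ A) : H i ≤ subproduct H A :=
  le_iInf₂ fun _ hj => hcomm fun h => hj (h ▸ hi)

theorem subproduct_le_centralizer (hi : i ∉ A) :
    subproduct H A ≤ centralizer (H i : Set G) :=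
  iInf₂_le i hi

theorem iInf_centralizer_le_subproduct (H : ι → Subgroup G) (A : Set ι) :
    ⨅ i, centralizer (H i : Set G) ≤ subproduct H A :=
  le_iInf₂ fun i _ => iInf_le _ i

theorem isClosed_subproduct [TopologicalSpace G] [ContinuousMul G] [T2Space G]
    (H : ι → Subgroup G) (A : Set ι) : IsClosed (subproduct H A : Set G) := by
  simp only [subproduct, coe_iInf]
  exact isClosed_iInter fun i => isClosed_iInter fun _ => Set.isClosed_centralizer _

theorem relIndex_subproduct_eq_zero (hH : ∀ i, H i ⊓ centralizer (H i : Set G) = ⊥)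
    (hne : ∀ i, H i ≠ ⊥) (hcomm : Pairwise fun i j => H j ≤ centralizer (H i : Set G))
    {A A' : Set ι} (hAA' : (A \ A').Infinite) :
    (subproduct H A').relIndex (subproduct H A) = 0 := by
  choose w hw using fun i => ne_bot_iff_exists_ne_one.mp (hne i)
  -- the `w i` with `i ∈ A \ A'` lie in pairwise distinct cosets of `subproduct H A'`
  let coset : ↥(A \ A') → subproduct H A ⧸ (subproduct H A').subgroupOf (subproduct H A) :=
    fun i => QuotientGroup.mk ⟨w i, le_subproduct hcomm i.2.1 (w i).2⟩
  have hinj : Function.Injective coset := by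
    rintro ⟨i, _, hiA'⟩ ⟨j, _⟩ hij
    rcases eq_or_ne i j with rfl | hij'
    · rfl
    have hwij : ((w i)⁻¹ * w j : G) ∈ centralizer (H i : Set G) :=
      subproduct_le_centralizer hiA' (by simpa [coset, QuotientGroup.eq, mem_subgroupOf] using hij)
    have hwi : (w i : G) ∈ H i ⊓ centralizer (H i : Set G) :=
      ⟨(w i).2, by simpa using mul_mem hwij (inv_mem (hcomm hij' (w j).2))⟩
    rw [hH i, mem_bot] at hwi
    exact (hw i (Subtype.ext hwi)).elim
  have := hAA'.to_subtype
  have : Infinite (subproduct H A ⧸ (subproduct H A').subgroupOf (subproduct H A)) :=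
    Infinite.of_injective coset hinj
  exact Nat.card_eq_zero_of_infinite

end Subproduct

section Product

variable {G : Type*} [Group G] [TopologicalSpace G] {H : ℕ → Subgroup G}

noncomputable def piProj (hH : ∀ i, IsDirectFactor' (H i)) : G →* ∀ i, H i :=
  MonoidHom.pi fun i => (hH i).proj

theorem piProj_eq_one_iff (hH : ∀ i, IsDirectFactor' (H i)) {x : G} :
    piProj hH x = 1 ↔ x ∈ ⨅ i, centralizer (H i : Set G) := by
  rw [mem_iInf, funext_iff]
  exact forall_congr' fun i => (hH i).proj_eq_one_iff

variable [IsTopologicalGroup G] [CompactSpace G] [T2Space G]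

theorem IsDirectFactor'.continuous_proj {K : Subgroup G} (h : IsDirectFactor' K) :
    Continuous h.proj := by
  have : CompactSpace K := isCompact_iff_compactSpace.mp h.1.isCompact
  have : CompactSpace (centralizer (K : Set G)) :=
    isCompact_iff_compactSpace.mp (Set.isClosed_centralizer _).isCompact
  have hmul : Continuous (IsDirectFactor'.mulHom K) :=
    show Continuous fun p : K × centralizer (K : Set G) => (p.1 : G) * p.2 by fun_prop
  exact continuous_fst.comp (hmul.continuous_symm_of_equiv_compact_to_t2 (f := h.mulEquiv.toEquiv))

theorem continuous_piProj (hH : ∀ i, IsDirectFactor' (H i)) : Continuous (piProj hH) :=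
  continuous_pi fun i => (hH i).continuous_proj

theorem mem_image_piProj (hH : ∀ i, IsDirectFactor' (H i))
    (hcomm : Pairwise fun i j => H j ≤ centralizer (H i : Set G)) {M : Subgroup G}
    (hM : IsClosed (M : Set G)) (hHM : ∀ i, H i ≤ M) (f : ∀ i, H i) :
    f ∈ piProj hH '' M := by
  -- `f` is the limit of the images of the partial products `f 0 * ⋯ * f (n - 1)`
  let g : ℕ → G := fun n => ((List.range n).map fun i => (f i : G)).prod
  have hgM : ∀ n, g n ∈ M := fun n =>
    list_prod_mem (by simpa using fun i _ => hHM i (f i).2)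
  have hproj : ∀ n j, ((hH j).proj (g n) : G) = if j < n then (f j : G) else 1 := by
    intro n j
    induction n with
    | zero => simp [g]
    | succ n ih =>
      have hgsucc : g (n + 1) = g n * f n := List.prod_range_succ _ n
      rw [hgsucc, map_mul, Subgroup.coe_mul, ih]
      rcases lt_trichotomy j n with hjn | rfl | hjn
      · rw [(hH j).proj_eq_one_iff.mpr (hcomm hjn.ne (f n).2)]
        simp [hjn, hjn.trans (Nat.lt_succ_self n)]
      · simp [(hH j).coe_proj_of_mem (f j).2]
      · rw [(hH j).proj_eq_one_iff.mpr (hcomm hjn.ne' (f n).2)]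
        simp [hjn.not_gt, (Nat.succ_le_of_lt hjn).not_gt]
  have htend : Filter.Tendsto (fun n => piProj hH (g n)) Filter.atTop (nhds f) :=
    tendsto_pi_nhds.mpr fun j => tendsto_atTop_of_eventually_const (i₀ := j + 1) fun n hn =>
      Subtype.ext <| (hproj n j).trans (if_pos hn)
  exact ((hM.isCompact.image (continuous_piProj hH)).isClosed).mem_of_tendsto htend
    (Filter.Eventually.of_forall fun n => ⟨g n, hgM n, rfl⟩)

theorem eq_top_of_isClosed (hH : ∀ i, IsDirectFactor' (H i))
    (hcomm : Pairwise fun i j => H j ≤ centralizer (H i : Set G)) {M : Subgroup G}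
    (hM : IsClosed (M : Set G)) (hHM : ∀ i, H i ≤ M)
    (hCM : ⨅ i, centralizer (H i : Set G) ≤ M) : M = ⊤ := by
  refine eq_top_iff.mpr fun x _ => ?_
  obtain ⟨m, hm, hmx⟩ := mem_image_piProj hH hcomm hM hHM (piProj hH x)
  have hmx' : m⁻¹ * x ∈ M :=
    hCM ((piProj_eq_one_iff hH).mp (by rw [map_mul, map_inv, hmx, inv_mul_cancel]))
  simpa using mul_mem hm hmx'

theorem exists_mulEquiv_pi (hH : ∀ i, IsDirectFactor' (H i))
    (hcomm : Pairwise fun i j => H j ≤ centralizer (H i : Set G))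
    (hinf : ⨅ i, centralizer (H i : Set G) = ⊥) :
    ∃ e : G ≃* (∀ i, H i), Continuous e ∧ Continuous e.symm := by
  have hbij : Function.Bijective (piProj hH) :=
    ⟨(injective_iff_map_eq_one _).mpr fun x hx => by
      simpa [hinf] using (piProj_eq_one_iff hH).mp hx,
    fun f => by
      obtain ⟨x, -, hx⟩ := mem_image_piProj hH hcomm (M := ⊤) isClosed_univ (fun _ => le_top) f
      exact ⟨x, hx⟩⟩
  let e := MulEquiv.ofBijective _ hbij
  exact ⟨e, continuous_piProj hH,
    (continuous_piProj hH).continuous_symm_of_equiv_compact_to_t2 (f := e.toEquiv)⟩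

theorem isDirectFactor'_subproduct (hZ : center G = ⊥) (hH : ∀ i, IsDirectFactor' (H i))
    (hcomm : Pairwise fun i j => H j ≤ centralizer (H i : Set G)) (A : Set ℕ) :
    IsDirectFactor' (subproduct H A) := by
  set P := subproduct H A
  have hP : IsClosed (P : Set G) := isClosed_subproduct H A
  have hsup : P ⊔ centralizer (P : Set G) = ⊤ := by
    refine eq_top_of_isClosed hH hcomm ?_ (fun i => ?_)
      ((iInf_centralizer_le_subproduct H A).trans le_sup_left)
    · rw [coe_sup_eq_mul_of_le_centralizer le_rfl]
      exact (hP.isCompact.mul (Set.isClosed_centralizer _).isCompact).isClosed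
    · by_cases hi : i ∈ A
      · exact (le_subproduct hcomm hi).trans le_sup_left
      · exact (le_centralizer_iff.mp (subproduct_le_centralizer hi)).trans le_sup_right
  exact ⟨hP, inf_centralizer_eq_bot_of_sup_eq_top hZ hsup, hsup⟩

theorem exists_pairwise_commute_iInf_centralizer_eq_bot (hZ : center G = ⊥)
    {B : ℕ → Subgroup G} (hB : ∀ n, IsDirectFactor' (B n) ∧ B n ≠ ⊥)
    (hcomm : Pairwise fun i j => B j ≤ centralizer (B i : Set G)) :
    ∃ H : ℕ → Subgroup G, (∀ n, IsDirectFactor' (H n) ∧ H n ≠ ⊥) ∧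
      (Pairwise fun i j => H j ≤ centralizer (H i : Set G)) ∧
        ⨅ i, centralizer (H i : Set G) = ⊥ := by
  -- enlarge `B 0` to absorb the common centralizer of all the `B n`
  set P := subproduct B {0}
  have hPfac : IsDirectFactor' P := isDirectFactor'_subproduct hZ (fun n => (hB n).1) hcomm _
  have hPB : ∀ {n}, n ≠ 0 → P ≤ centralizer (B n : Set G) := fun hn =>
    subproduct_le_centralizer hn
  refine ⟨Function.update B 0 P, fun n => ?_, fun i j hij => ?_, eq_bot_iff.mpr fun z hz => ?_⟩
  · rcases eq_or_ne n 0 with rfl | hn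
    · exact ⟨by simpa using hPfac, by
        simpa using ne_bot_of_le_ne_bot (hB 0).2 (le_subproduct hcomm (Set.mem_singleton 0))⟩
    · simpa [hn] using hB n
  · rcases eq_or_ne i 0 with rfl | hi <;> rcases eq_or_ne j 0 with rfl | hj
    · exact absurd rfl hij
    · simpa [hj] using le_centralizer_iff.mp (hPB hj)
    · simpa [hi] using hPB hi
    · simpa [hi, hj] using hcomm hij
  · rw [mem_iInf] at hz
    have hzP : z ∈ P := mem_iInf.mpr fun n => mem_iInf.mpr fun hn => by
      simpa [show n ≠ 0 from hn] using hz n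
    have hzC : z ∈ centralizer (P : Set G) := by simpa using hz 0
    exact hPfac.2.1 ▸ mem_inf.mpr ⟨hzP, hzC⟩

end Product

def prefixCodes (x : ℕ → Bool) : Set ℕ :=
  Set.range fun n => Encodable.encode (List.ofFn fun i : Fin n => x i)

theorem infinite_prefixCodes_diff {x y : ℕ → Bool} (hxy : x ≠ y) :
    (prefixCodes x \ prefixCodes y).Infinite := by
  obtain ⟨n₀, hn₀⟩ := Function.ne_iff.mp hxy
  have hlen : ∀ {z w : ℕ → Bool} {n m : ℕ}, Encodable.encode (List.ofFn fun i : Fin n => z i) =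
      Encodable.encode (List.ofFn fun i : Fin m => w i) → n = m := fun h => by
    simpa using congrArg List.length (Encodable.encode_injective h)
  refine Set.infinite_of_injective_forall_mem
    (f := fun k => Encodable.encode (List.ofFn fun i : Fin (n₀ + 1 + k) => x i))
    (fun k l h => by simpa using hlen h) fun k => ⟨⟨_, rfl⟩, ?_⟩
  rintro ⟨m, hm⟩
  obtain rfl := hlen hm
  have := congrFun (List.ofFn_injective (Encodable.encode_injective hm)) ⟨n₀, by omega⟩
  exact hn₀ this.symm

theorem Subgroup.not_forall_exists_commensurable {G ι : Type*} [Group G] [Uncountable ι]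
    {f : ι → Subgroup G} (hf : Pairwise fun i j => ¬ (f i).Commensurable (f j))
    {T : Set (Subgroup G)} (hT : T.Countable) : ¬ ∀ i, ∃ K ∈ T, (f i).Commensurable K := by
  intro hcover
  choose c hcT hc using hcover
  have hinj : Function.Injective fun i => (⟨c i, hcT i⟩ : T) := fun i j hij => by
    by_contra hne
    have hcij : c i = c j := congrArg Subtype.val hij
    exact hf hne ((hc i).trans (hcij ▸ (hc j).symm))
  have := hT.to_subtype
  exact not_countable hinj.countable

theorem uncountable_nat_bool : Uncountable (ℕ → Bool) := by
  rw [← not_countable_iff, ← Cardinal.mk_le_aleph0_iff, not_le]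
  simpa using Cardinal.cantor Cardinal.aleph0

/-- A compact group with trivial centre that is not a finite internal direct product of
indecomposable closed (normal) subgroups is topologically isomorphic to an infinite Cartesian
product of non-trivial closed subgroups, and has uncountably many closed direct factors up to
commensurability. -/
theorem stmt_17 {G : Type*} [Group G] [TopologicalSpace G] [IsTopologicalGroup G]
    [CompactSpace G] [T2Space G]
    (hZ : Subgroup.center G = ⊥)
    (hnotfd : ¬ ∃ (n : ℕ) (A : Fin n → Subgroup G),
      (∀ i, IsClosed ((A i : Subgroup G) : Set G)) ∧ (∀ i, (A i).Normal) ∧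
        (∀ i, IsIndecomposable' (A i)) ∧ iSupIndep A ∧ ⨆ i, A i = ⊤) :
    (∃ H : ℕ → Subgroup G, (∀ i, H i ≠ ⊥ ∧ IsClosed ((H i : Subgroup G) : Set G)) ∧
        ∃ e : G ≃* (∀ i, H i), Continuous e ∧ Continuous e.symm) ∧
      (∃ S : Set (Subgroup G), (∀ H ∈ S, IsDirectFactor' H) ∧
        ∀ T : Set (Subgroup G), T.Countable →
          ¬ ∀ H ∈ S, ∃ K ∈ T, Subgroup.Commensurable H K) := by
  obtain ⟨B, hB, hBcomm⟩ :=
    (isDirectFactor'_top_iff.mpr hZ).exists_pairwise_commute (K := ⊤) hnotfd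
  obtain ⟨H, hH, hcomm, hinf⟩ := exists_pairwise_commute_iInf_centralizer_eq_bot hZ hB hBcomm
  have hfac : ∀ i, IsDirectFactor' (H i) := fun i => (hH i).1
  refine ⟨⟨H, fun i => ⟨(hH i).2, (hfac i).1⟩, exists_mulEquiv_pi hfac hcomm hinf⟩,
    Set.range fun x => subproduct H (prefixCodes x), ?_, fun T hT hcover => ?_⟩
  · rintro _ ⟨x, rfl⟩
    exact isDirectFactor'_subproduct hZ hfac hcomm _
  · have := uncountable_nat_bool
    refine not_forall_exists_commensurable (fun x y hxy hc => hc.2 ?_) hT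
      fun x => hcover _ ⟨x, rfl⟩
    exact relIndex_subproduct_eq_zero (fun i => (hfac i).2.1) (fun i => (hH i).2) hcomm
      (infinite_prefixCodes_diff hxy)
end

section
/- Let G be a totally disconnected locally compact group with QZ(G) = 1 and let H, K be subgroups of G such that H ∩ K is finite, N_H(K) has finite index in H, N_K(H) has finite index in K, and QZ(H) = 1. Then H centralises an open subgroup of K. -/
/-!
Every `m ∈ H ⊓ K` has finitely many conjugates under `N_H(K)`, all lying in `H ⊓ K`, so its
centraliser has finite index in `H`; being closed, it is open in `H`, and `QZ(H) = 1` gives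
`m = 1`. Hence `N_H(K)` and `N_K(H)` commute, their commutators lying in `H ⊓ K`. For
`k ∈ N_K(H)` and `h ∈ H`, the commutator `⁅h, k⁆ ∈ H` then centralises the normal core of `N_H(K)`
in `H`, a subgroup of finite index, so `⁅h, k⁆ = 1` as well. Thus `C_K(H) ⊇ N_K(H)` is a closed
subgroup of finite index in `K`, hence open in `K`, and by van Dantzig's theorem it contains
`K ⊓ U` for some open subgroup `U` of `G`.
-/

open scoped Pointwise commutatorElement

namespace Subgroup

variable {G : Type*} [Group G]

theorem centralizer_subgroupOf (L : Subgroup G) (g : L) :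
    (centralizer {(g : G)}).subgroupOf L = centralizer {g} := by
  ext x
  simp [mem_subgroupOf, mem_centralizer_singleton_iff, Subtype.ext_iff]

theorem index_centralizer_ne_zero_of_finite_orbit {g : G}
    (hg : (MulAction.orbit (ConjAct G) g).Finite) : (centralizer {g}).index ≠ 0 := by
  have hstab : (MulAction.stabilizer (ConjAct G) g).comap
      (ConjAct.toConjAct : G ≃* ConjAct G).toMonoidHom = centralizer {g} := by
    ext k
    simp [ConjAct.smul_def, mem_centralizer_singleton_iff, mul_inv_eq_iff_eq_mul]
  rw [← hstab, index_comap_of_surjective _ ConjAct.toConjAct.surjective,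
    MulAction.index_stabilizer]
  exact ((Set.ncard_pos hg).mpr ⟨g, MulAction.mem_orbit_self g⟩).ne'

theorem index_centralizer_coe_ne_zero {L : Subgroup G} (hL : L.index ≠ 0) {g : L}
    (hg : (centralizer {g}).index ≠ 0) : (centralizer {(g : G)}).index ≠ 0 := by
  rw [← relIndex_top_right] at hL ⊢
  refine relIndex_ne_zero_trans ?_ hL
  rwa [relIndex, centralizer_subgroupOf]

variable {H K : Subgroup G}

theorem commutatorElement_mem_left {h k : G} (hh : h ∈ H) (hk : k ∈ normalizer (H : Set G)) :
    ⁅h, k⁆ ∈ H := by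
  rw [commutatorElement_def, mul_assoc, mul_assoc, ← mul_assoc k]
  exact mul_mem hh ((mem_normalizer_iff.mp hk _).mp (inv_mem hh))

theorem commutatorElement_mem_right {h k : G} (hh : h ∈ normalizer (K : Set G)) (hk : k ∈ K) :
    ⁅h, k⁆ ∈ K := by
  rw [commutatorElement_def]
  exact mul_mem ((mem_normalizer_iff.mp hh _).mp hk) (inv_mem hk)

theorem commute_of_mem_inf_normalizer (hHK : H ⊓ K = ⊥) {h k : G}
    (hh : h ∈ H ⊓ normalizer (K : Set G)) (hk : k ∈ K ⊓ normalizer (H : Set G)) :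
    Commute h k := by
  have hmem : ⁅h, k⁆ ∈ H ⊓ K :=
    ⟨commutatorElement_mem_left hh.1 hk.2, commutatorElement_mem_right hh.2 hk.1⟩
  rwa [hHK, mem_bot, commutatorElement_eq_one_iff_commute] at hmem

theorem inf_eq_bot_of_finite
    (hFC : ∀ h : H, (centralizer {h}).index ≠ 0 → h = 1)
    (hHK : ((H ⊓ K : Subgroup G) : Set G).Finite)
    (hNH : (normalizer (K : Set G)).relIndex H ≠ 0) : H ⊓ K = ⊥ := by
  refine eq_bot_iff.mpr fun m hm => mem_bot.mpr ?_
  let L := (normalizer (K : Set G)).subgroupOf H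
  let m' : L := ⟨⟨m, hm.1⟩, mem_subgroupOf.mpr (le_normalizer hm.2)⟩
  -- `L` normalises both `H` and `K`, so the `L`-conjugates of `m` stay in the finite set `H ⊓ K`.
  have horbit : MulAction.orbit (ConjAct L) m' ⊆ (fun x : L => (x : G)) ⁻¹' (H ⊓ K) := by
    rintro _ ⟨x, rfl⟩
    refine ⟨(x • m' : L).1.2, ?_⟩
    have hx : ((ConjAct.ofConjAct x : L) : G) ∈ normalizer (K : Set G) :=
      mem_subgroupOf.mp (ConjAct.ofConjAct x).2
    simp only [ConjAct.smul_def, Subgroup.coe_mul, Subgroup.coe_inv]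
    exact (mem_normalizer_iff.mp hx _).mp hm.2
  have hfin : (MulAction.orbit (ConjAct L) m').Finite :=
    (hHK.preimage (Subtype.val_injective.comp Subtype.val_injective).injOn).subset horbit
  have hm' : (centralizer {(⟨m, hm.1⟩ : H)}).index ≠ 0 :=
    index_centralizer_coe_ne_zero (g := m') hNH (index_centralizer_ne_zero_of_finite_orbit hfin)
  exact congrArg Subtype.val (hFC ⟨m, hm.1⟩ hm')

theorem inf_normalizer_le_centralizer
    (hFC : ∀ h : H, (centralizer {h}).index ≠ 0 → h = 1)
    (hHK : ((H ⊓ K : Subgroup G) : Set G).Finite)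
    (hNH : (normalizer (K : Set G)).relIndex H ≠ 0) :
    K ⊓ normalizer (H : Set G) ≤ centralizer (H : Set G) := by
  intro k hk
  refine mem_centralizer_iff.mpr fun h hh => ?_
  have : ((normalizer (K : Set G)).subgroupOf H).FiniteIndex := ⟨hNH⟩
  let A := ((normalizer (K : Set G)).subgroupOf H).normalCore
  have hAk : ∀ a ∈ A, Commute (a : G) k := fun a ha =>
    commute_of_mem_inf_normalizer (inf_eq_bot_of_finite hFC hHK hNH)
      ⟨a.2, mem_subgroupOf.mp (normalCore_le _ ha)⟩ hk
  let c : H := ⟨⁅h, k⁆, commutatorElement_mem_left hh hk.2⟩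
  -- `A` is normal in `H`, so it commutes with `h k h⁻¹` as well as with `k`.
  have hAc : A ≤ centralizer {c} := by
    intro a ha
    have hconj : Commute (a : G) (h * k * h⁻¹) := by
      simpa [mul_assoc] using
        (hAk _ ((normalCore_normal _).conj_mem a ha ⟨h, hh⟩⁻¹)).conj h
    rw [mem_centralizer_singleton_iff, Subtype.ext_iff]
    exact (hconj.mul_right (hAk a ha).inv_right).eq
  have hc : ⁅h, k⁆ = 1 := congrArg Subtype.val (hFC c (finiteIndex_of_le hAc).index_ne_zero)
  exact commutatorElement_eq_one_iff_mul_comm.mp hc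

end Subgroup

theorem IsTopologicalGroup.eq_one_of_index_centralizer_ne_zero {G : Type*} [Group G]
    [TopologicalSpace G] [IsTopologicalGroup G] [T2Space G]
    (hQZ : ∀ g : G, IsOpen ((Subgroup.centralizer ({g} : Set G) : Subgroup G) : Set G) → g = 1)
    {g : G} (hg : (Subgroup.centralizer {g}).index ≠ 0) : g = 1 :=
  have : (Subgroup.centralizer {g}).FiniteIndex := ⟨hg⟩
  hQZ g <| Subgroup.isOpen_of_isClosed_of_finiteIndex _ (Set.isClosed_centralizer _)

theorem IsTopologicalGroup.exists_openSubgroup_subset_of_isCompact_of_isOpen {G : Type*} [Group G]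
    [TopologicalSpace G] [IsTopologicalGroup G] {W : Set G} (hWc : IsCompact W) (hWo : IsOpen W)
    (hW : 1 ∈ W) : ∃ U : OpenSubgroup G, (U : Set G) ⊆ W := by
  -- The stabiliser of `W` under left translation lies in `W` since `1 ∈ W`, and it contains a
  -- neighbourhood of `1` because `T * W ⊆ W` for some `T ∈ 𝓝 1` by compactness.
  obtain ⟨T, hT, hTW⟩ := compact_open_separated_mul_left hWc hWo subset_rfl
  have hsub : ∀ g ∈ T, g • W ⊆ W := fun g hg =>
    Set.smul_set_subset_iff.mpr fun w hw => hTW (Set.mul_mem_mul hg hw)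
  let U := MulAction.stabilizer G W
  have hU : (U : Set G) ∈ nhds 1 := by
    filter_upwards [hT, inv_mem_nhds_one G hT] with g hg hg'
    exact (hsub g hg).antisymm (Set.subset_smul_set_iff.mpr (hsub _ hg'))
  refine ⟨⟨U, U.isOpen_of_mem_nhds hU⟩, fun g hg => ?_⟩
  rw [← (MulAction.mem_stabilizer_iff.mp hg : g • W = W)]
  simpa using Set.smul_mem_smul_set (a := g) hW

theorem IsTopologicalGroup.exists_openSubgroup_subset_of_mem_nhds {G : Type*} [Group G]
    [TopologicalSpace G] [IsTopologicalGroup G] [LocallyCompactSpace G]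
    [TotallyDisconnectedSpace G] {V : Set G} (hV : V ∈ nhds 1) :
    ∃ U : OpenSubgroup G, (U : Set G) ⊆ V := by
  obtain ⟨s, hs, hsV, hsc⟩ := local_compact_nhds hV
  obtain ⟨W, hW, hW1, hWs⟩ := loc_compact_Haus_tot_disc_of_zero_dim.mem_nhds_iff.mp hs
  obtain ⟨U, hUW⟩ := exists_openSubgroup_subset_of_isCompact_of_isOpen
    (hsc.of_isClosed_subset hW.isClosed hWs) hW.isOpen hW1
  exact ⟨U, hUW.trans (hWs.trans hsV)⟩

theorem Subgroup.exists_openSubgroup_inf_le {G : Type*} [Group G]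
    [TopologicalSpace G] [IsTopologicalGroup G] [LocallyCompactSpace G]
    [TotallyDisconnectedSpace G] {K S : Subgroup G} (hS : IsOpen (S.subgroupOf K : Set K)) :
    ∃ U : OpenSubgroup G, K ⊓ U ≤ S := by
  obtain ⟨V, hV, hVS⟩ := isOpen_induced_iff.mp hS
  have hV1 : (1 : K) ∈ Subtype.val ⁻¹' V := hVS ▸ (S.subgroupOf K).one_mem
  obtain ⟨U, hUV⟩ := IsTopologicalGroup.exists_openSubgroup_subset_of_mem_nhds (hV.mem_nhds hV1)
  refine ⟨U, fun x hx => ?_⟩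
  have hxS : (⟨x, hx.1⟩ : K) ∈ (S.subgroupOf K : Set K) := hVS ▸ hUV hx.2
  exact mem_subgroupOf.mp hxS

theorem stmt_19_general {G : Type*} [Group G] [TopologicalSpace G] [IsTopologicalGroup G]
    [LocallyCompactSpace G] [TotallyDisconnectedSpace G]
    (H K : Subgroup G)
    (hHK : ((H ⊓ K : Subgroup G) : Set G).Finite)
    (hNH : (Subgroup.normalizer (K : Set G)).relIndex H ≠ 0)
    (hNK : (Subgroup.normalizer (H : Set G)).relIndex K ≠ 0)
    (hQZH : ∀ h : H,
      IsOpen ((Subgroup.centralizer ({h} : Set H) : Subgroup H) : Set H) → h = 1) :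
    ∃ U : Subgroup G, IsOpen (U : Set G) ∧
      H ≤ Subgroup.centralizer ((K ⊓ U : Subgroup G) : Set G) := by
  have hNKC := Subgroup.inf_normalizer_le_centralizer
    (fun _ => IsTopologicalGroup.eq_one_of_index_centralizer_ne_zero hQZH) hHK hNH
  let C := (Subgroup.centralizer (H : Set G)).subgroupOf K
  have : ((Subgroup.normalizer (H : Set G)).subgroupOf K).FiniteIndex := ⟨hNK⟩
  have : C.FiniteIndex := Subgroup.finiteIndex_of_le
    fun x hx => Subgroup.mem_subgroupOf.mpr (hNKC ⟨x.2, Subgroup.mem_subgroupOf.mp hx⟩)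
  have hC : IsOpen (C : Set K) := C.isOpen_of_isClosed_of_finiteIndex <|
    (Set.isClosed_centralizer _).preimage continuous_subtype_val
  obtain ⟨U, hU⟩ := Subgroup.exists_openSubgroup_inf_le hC
  exact ⟨U, U.isOpen, Subgroup.le_centralizer_iff.mpr hU⟩

/-- If `G` is a t.d.l.c. group with trivial quasi-centre, and `H`, `K` are subgroups such that
`H ∩ K` is finite, `N_H(K)` has finite index in `H`, `N_K(H)` has finite index in `K`, and the
quasi-centre of `H` is trivial, then `H` centralises an open subgroup of `K`. -/
theorem stmt_19 {G : Type*} [Group G] [TopologicalSpace G] [IsTopologicalGroup G]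
    [LocallyCompactSpace G] [TotallyDisconnectedSpace G]
    (hQZ : ∀ g : G,
      IsOpen ((Subgroup.centralizer ({g} : Set G) : Subgroup G) : Set G) → g = 1)
    (H K : Subgroup G)
    (hHK : ((H ⊓ K : Subgroup G) : Set G).Finite)
    (hNH : (Subgroup.normalizer (K : Set G)).relIndex H ≠ 0)
    (hNK : (Subgroup.normalizer (H : Set G)).relIndex K ≠ 0)
    (hQZH : ∀ h : H,
      IsOpen ((Subgroup.centralizer ({h} : Set H) : Subgroup H) : Set H) → h = 1) :
    ∃ U : Subgroup G, IsOpen (U : Set G) ∧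
      H ≤ Subgroup.centralizer ((K ⊓ U : Subgroup G) : Set G) :=
  stmt_19_general H K hHK hNH hNK hQZH
end
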